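/- arXiv:1310.8114 — 5 statements merged into one kernel-verified Lean document; each statement's English description precedes it below -/
import Mathlib

section
/- Suppose K = 1 and that Assumption 2.1 and the ergodicity condition (2.6) hold. Then for every sign vector x ∈ {−1,1}^c there exists at least one β₀ ∈ (0,1) such that Σ_{i=1}^c h_i(β₀) = 0, where h_i is formed with the sign x_i. -/
open scoped BigOperators

/-- `Gval a β = Σ_{m=0}^∞ a_m β^m`, encoding `A_i(β) = Σ_{k=-∞}^K a_{k,i} β^{K-k}`
via the reindexing `m = K - k`. -/
noncomputable def Gval (a : ℕ → ℝ) (β : ℝ) : ℝ := ∑' m : ℕ, a m * β ^ m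

/-- `A_i(1)`. -/
noncomputable def Gone (a : ℕ → ℝ) : ℝ := ∑' m : ℕ, a m

/-- `A_i'(1) = Σ_{k=-∞}^K (K-k) a_{k,i}`. -/
noncomputable def Gder (a : ℕ → ℝ) : ℝ := ∑' m : ℕ, (m : ℝ) * a m

/-- `F_i(β) = β^K (A_i(1)+B_i(1)-C_i(1)-D_i(1)) - B_i(β) + C_i(β)`. -/
noncomputable def Fval (K : ℕ) (a b cc d : ℕ → ℝ) (β : ℝ) : ℝ :=
  β ^ K * (Gone a + Gone b - Gone cc - Gone d) - Gval b β + Gval cc β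

/-- `h_i(β)` formed with the sign `x`. -/
noncomputable def hval (K : ℕ) (a b cc d : ℕ → ℝ) (x β : ℝ) : ℝ :=
  x * Real.sqrt (Fval K a b cc d β ^ 2 + 4 * Gval a β * Gval d β)
    + Gval b β + Gval cc β - β ^ K * (Gone a + Gone b + Gone cc + Gone d)

/-- Assumption 2.1 of the paper (the coefficient `a i 0` encodes `a_{K,i}`). -/
structure Assumption21 (c K : ℕ) (a b cc d : Fin c → ℕ → ℝ) : Prop where
  nna : ∀ i m, 0 ≤ a i m
  nnb : ∀ i m, 0 ≤ b i m
  nnc : ∀ i m, 0 ≤ cc i m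
  nnd : ∀ i m, 0 ≤ d i m
  suma : ∀ i, Summable (a i)
  sumb : ∀ i, Summable (b i)
  sumc : ∀ i, Summable (cc i)
  sumd : ∀ i, Summable (d i)
  posA : ∀ i, 0 < Gone (a i)
  posD : ∀ i, 0 < Gone (d i)
  dera : ∀ i, Summable (fun m : ℕ => (m : ℝ) * a i m)
  derb : ∀ i, Summable (fun m : ℕ => (m : ℝ) * b i m)
  derc : ∀ i, Summable (fun m : ℕ => (m : ℝ) * cc i m)
  derd : ∀ i, Summable (fun m : ℕ => (m : ℝ) * d i m)
  hiv : ∀ i, a i 0 = 0 ∨ d i 0 = 0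
  hv1 : ∀ i, b i 0 = cc i 0
  hv2 : ∀ i, b i 0 ≠ 0

/-- The right-hand side of the ergodicity condition (2.6). -/
noncomputable def ergo (c K : ℕ) (a b cc d : Fin c → ℕ → ℝ) : ℝ :=
  ∑ i : Fin c,
    (Gone (d i) * (Gder (a i) - K * Gone (a i) + Gder (b i) - K * Gone (b i))
      + Gone (a i) * (Gder (cc i) - K * Gone (cc i) + Gder (d i) - K * Gone (d i)))
      / (Gone (a i) + Gone (d i))

/-!
The function `g = Σ_i h_i` is continuous on `[0,1]` with `g(0) = Σ_i 2 b_{K,i} > 0`, because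
`F_i(0) = 0` and `A_i(0) D_i(0) = 0`. At `β = 1` the square root equals `A_i(1) + D_i(1)`, so
`h_i(1) = (x_i - 1)(A_i(1) + D_i(1)) ≤ 0`. If some `x_i = -1` then `g(1) < 0`; otherwise
`g(1) = 0` and the left derivative of `g` at `1` is twice the ergodicity quantity (2.6), which is
positive, so `g` is negative just to the left of `1`. The intermediate value theorem gives the root.
-/

open Set Filter Topology

lemma exists_mem_Ioo_lt_of_hasDerivWithinAt_pos {f : ℝ → ℝ} {f' a b : ℝ} (hab : a < b)
    (hf : HasDerivWithinAt f f' (Ioo a b) b) (hf' : 0 < f') : ∃ x ∈ Ioo a b, f x < f b := by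
  rw [hasDerivWithinAt_iff_tendsto_slope' fun h => lt_irrefl b h.2] at hf
  have : (𝓝[Ioo a b] b).NeBot := right_nhdsWithin_Ioo_neBot hab
  obtain ⟨x, hslope, hx⟩ := ((hf.eventually (eventually_gt_nhds hf')).and self_mem_nhdsWithin).exists
  exact ⟨x, hx, (slope_pos_iff_gt hx.2).1 hslope⟩

lemma sum_range_pow_le {β : ℝ} (h0 : 0 ≤ β) (h1 : β ≤ 1) (m : ℕ) :
    ∑ j ∈ Finset.range m, β ^ j ≤ m := by
  simpa using Finset.sum_le_card_nsmul (Finset.range m) (β ^ ·) 1 fun j _ => pow_le_one₀ h0 h1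

lemma mul_pow_le_sum_range_pow {β : ℝ} (h0 : 0 ≤ β) (h1 : β ≤ 1) (m : ℕ) :
    m * β ^ m ≤ ∑ j ∈ Finset.range m, β ^ j := by
  simpa using Finset.card_nsmul_le_sum (Finset.range m) (β ^ ·) (β ^ m)
    fun j hj => pow_le_pow_of_le_one h0 h1 (Finset.mem_range.1 hj).le

section PowerSeries

variable {a : ℕ → ℝ}

lemma gval_one : Gval a 1 = Gone a := by simp [Gval, Gone]

lemma gval_zero : Gval a 0 = a 0 := by
  rw [Gval, tsum_eq_single 0 fun m hm => by simp [zero_pow hm]]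
  simp

lemma summable_mul_pow (ha : Summable a) (hnn : ∀ m, 0 ≤ a m) {β : ℝ} (h0 : 0 ≤ β)
    (h1 : β ≤ 1) : Summable fun m => a m * β ^ m :=
  ha.of_nonneg_of_le (fun m => mul_nonneg (hnn m) (pow_nonneg h0 m))
    fun m => mul_le_of_le_one_right (hnn m) (pow_le_one₀ h0 h1)

lemma continuousOn_gval (ha : Summable a) (hnn : ∀ m, 0 ≤ a m) :
    ContinuousOn (Gval a) (Icc 0 1) := by
  refine continuousOn_tsum (fun m => (continuous_const.mul (continuous_pow m)).continuousOn)
    ha fun m β hβ => ?_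
  rw [Real.norm_eq_abs, abs_of_nonneg (mul_nonneg (hnn m) (pow_nonneg hβ.1 m))]
  exact mul_le_of_le_one_right (hnn m) (pow_le_one₀ hβ.1 hβ.2)

lemma slope_gval_one (ha : Summable a) (hnn : ∀ m, 0 ≤ a m) {β : ℝ} (h0 : 0 ≤ β) (h1 : β ≤ 1)
    (hβ : β ≠ 1) : slope (Gval a) 1 β = ∑' m, a m * ∑ j ∈ Finset.range m, β ^ j := by
  rw [slope_def_field, Gval, Gval, ← (summable_mul_pow ha hnn h0 h1).tsum_sub
    (summable_mul_pow ha hnn zero_le_one le_rfl), ← tsum_div_const]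
  refine tsum_congr fun m => ?_
  rw [div_eq_iff (sub_ne_zero_of_ne hβ)]
  linear_combination (-(a m)) * geom_sum_mul β m

/-- The slope from `1` to `β` is squeezed between `Σ m a_m β^m` and `Σ m a_m`. -/
lemma hasDerivWithinAt_gval_one (ha : Summable a) (hnn : ∀ m, 0 ≤ a m)
    (hd : Summable fun m : ℕ => (m : ℝ) * a m) :
    HasDerivWithinAt (Gval a) (Gder a) (Icc 0 1) 1 := by
  rw [hasDerivWithinAt_iff_tendsto_slope]
  have hmnn : ∀ m : ℕ, 0 ≤ (m : ℝ) * a m := fun m => mul_nonneg m.cast_nonneg (hnn m)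
  have hlow : Tendsto (Gval fun m => (m : ℝ) * a m) (𝓝[Icc 0 1 \ {1}] 1) (𝓝 (Gder a)) := by
    have := (continuousOn_gval hd hmnn 1 ⟨zero_le_one, le_rfl⟩).tendsto
    rw [gval_one] at this
    exact this.mono_left (nhdsWithin_mono _ sdiff_subset)
  have hbound : ∀ {β : ℝ}, 0 ≤ β → β ≤ 1 → ∀ m,
      a m * ∑ j ∈ Finset.range m, β ^ j ≤ (m : ℝ) * a m := fun h0 h1 m => by
    rw [mul_comm (m : ℝ)]
    exact mul_le_mul_of_nonneg_left (sum_range_pow_le h0 h1 m) (hnn m)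
  have hsum : ∀ {β : ℝ}, 0 ≤ β → β ≤ 1 →
      Summable fun m => a m * ∑ j ∈ Finset.range m, β ^ j := fun h0 h1 =>
    hd.of_nonneg_of_le (fun m => mul_nonneg (hnn m) (Finset.sum_nonneg fun j _ =>
      pow_nonneg h0 j)) (hbound h0 h1)
  refine tendsto_of_tendsto_of_tendsto_of_le_of_le' hlow tendsto_const_nhds ?_ ?_ <;>
    filter_upwards [self_mem_nhdsWithin] with β ⟨⟨h0, h1⟩, hβ⟩ <;>
    rw [slope_gval_one ha hnn h0 h1 hβ]
  · refine (summable_mul_pow hd hmnn h0 h1).tsum_le_tsum (fun m => ?_) (hsum h0 h1)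
    rw [mul_assoc, mul_left_comm]
    exact mul_le_mul_of_nonneg_left (mul_pow_le_sum_range_pow h0 h1 m) (hnn m)
  · exact (hsum h0 h1).tsum_le_tsum (hbound h0 h1) hd

end PowerSeries

section Components

variable {K : ℕ} {a b cc d : ℕ → ℝ}

lemma fval_one : Fval K a b cc d 1 = Gone a - Gone d := by
  simp only [Fval, gval_one, one_pow]; ring

lemma sqrt_discriminant_one (h : 0 ≤ Gone a + Gone d) :
    Real.sqrt (Fval K a b cc d 1 ^ 2 + 4 * Gval a 1 * Gval d 1) = Gone a + Gone d := by
  rw [fval_one, gval_one, gval_one, ← Real.sqrt_sq h]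
  ring_nf

lemma hval_one (h : 0 ≤ Gone a + Gone d) (x : ℝ) :
    hval K a b cc d x 1 = (x - 1) * (Gone a + Gone d) := by
  rw [hval, sqrt_discriminant_one h, gval_one, gval_one, one_pow]; ring

lemma hval_zero (hK : K ≠ 0) (hbc : b 0 = cc 0) (had : a 0 * d 0 = 0) (x : ℝ) :
    hval K a b cc d x 0 = b 0 + cc 0 := by
  simp [hval, Fval, gval_zero, hbc, mul_assoc, had, hK]

end Components

namespace Assumption21

variable {c K : ℕ} {a b cc d : Fin c → ℕ → ℝ}

lemma hval_zero_pos (h : Assumption21 c K a b cc d) (hK : K ≠ 0) (i : Fin c) (x : ℝ) :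
    0 < hval K (a i) (b i) (cc i) (d i) x 0 := by
  have had : a i 0 * d i 0 = 0 := by rcases h.hiv i with h | h <;> simp [h]
  rw [hval_zero hK (h.hv1 i) had, ← h.hv1 i]
  linarith [lt_of_le_of_ne (h.nnb i 0) (h.hv2 i).symm]

lemma continuousOn_hval (h : Assumption21 c K a b cc d) (i : Fin c) (x : ℝ) :
    ContinuousOn (hval K (a i) (b i) (cc i) (d i) x) (Icc 0 1) := by
  have cA := continuousOn_gval (h.suma i) (h.nna i)
  have cB := continuousOn_gval (h.sumb i) (h.nnb i)
  have cC := continuousOn_gval (h.sumc i) (h.nnc i)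
  have cD := continuousOn_gval (h.sumd i) (h.nnd i)
  have cF : ContinuousOn (Fval K (a i) (b i) (cc i) (d i)) (Icc 0 1) :=
    (((continuous_pow K).continuousOn.mul continuousOn_const).sub cB).add cC
  exact (((continuousOn_const.mul ((cF.pow 2).add ((continuousOn_const.mul cA).mul cD)).sqrt).add
    cB).add cC).sub ((continuous_pow K).continuousOn.mul continuousOn_const)

lemma hasDerivWithinAt_hval_one (h : Assumption21 c K a b cc d) (i : Fin c) :
    HasDerivWithinAt (hval K (a i) (b i) (cc i) (d i) 1)
      (2 * ((Gone (d i) * (Gder (a i) - K * Gone (a i) + Gder (b i) - K * Gone (b i))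
        + Gone (a i) * (Gder (cc i) - K * Gone (cc i) + Gder (d i) - K * Gone (d i)))
          / (Gone (a i) + Gone (d i)))) (Icc 0 1) 1 := by
  have HA := hasDerivWithinAt_gval_one (h.suma i) (h.nna i) (h.dera i)
  have HB := hasDerivWithinAt_gval_one (h.sumb i) (h.nnb i) (h.derb i)
  have HC := hasDerivWithinAt_gval_one (h.sumc i) (h.nnc i) (h.derc i)
  have HD := hasDerivWithinAt_gval_one (h.sumd i) (h.nnd i) (h.derd i)
  have hAD : 0 < Gone (a i) + Gone (d i) := add_pos (h.posA i) (h.posD i)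
  have HF : HasDerivWithinAt (Fval K (a i) (b i) (cc i) (d i)) _ (Icc 0 1) 1 :=
    (((hasDerivWithinAt_pow K 1).mul_const _).sub HB).add HC
  have HQ : HasDerivWithinAt (fun β => Fval K (a i) (b i) (cc i) (d i) β ^ 2
      + 4 * Gval (a i) β * Gval (d i) β) _ (Icc 0 1) 1 :=
    (HF.pow 2).add ((HA.const_mul 4).mul HD)
  have HS := HQ.sqrt (by rw [fval_one, gval_one, gval_one]; nlinarith)
  have H : HasDerivWithinAt (hval K (a i) (b i) (cc i) (d i) 1) _ (Icc 0 1) 1 :=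
    (((HS.const_mul 1).add HB).add HC).sub ((hasDerivWithinAt_pow K 1).mul_const _)
  refine H.congr_deriv ?_
  rw [sqrt_discriminant_one hAD.le, fval_one, gval_one, gval_one]
  field_simp
  ring

end Assumption21

theorem stmt0_general (c : ℕ) (a b cc d : Fin c → ℕ → ℝ)
    (h21 : Assumption21 c 1 a b cc d) (herg : 0 < ergo c 1 a b cc d)
    (x : Fin c → ℝ) (hx : ∀ i, x i = 1 ∨ x i = -1) :
    ∃ β₀ ∈ Set.Ioo (0 : ℝ) 1,
      ∑ i : Fin c, hval 1 (a i) (b i) (cc i) (d i) (x i) β₀ = 0 := by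
  set g : ℝ → ℝ := fun β => ∑ i : Fin c, hval 1 (a i) (b i) (cc i) (d i) (x i) β
  have hAD : ∀ i, 0 < Gone (a i) + Gone (d i) := fun i => add_pos (h21.posA i) (h21.posD i)
  have hg0 : 0 < g 0 := Finset.sum_pos (fun i _ => h21.hval_zero_pos one_ne_zero i (x i))
    (Finset.nonempty_of_sum_ne_zero herg.ne')
  have hcont : ContinuousOn g (Icc 0 1) :=
    continuousOn_finsetSum _ fun i _ => h21.continuousOn_hval i (x i)
  obtain ⟨β₁, hβ₁, hgβ₁⟩ : ∃ β₁ ∈ Ioc 0 1, g β₁ < 0 := by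
    by_cases hall : ∀ i, x i = 1
    · have hg1 : g 1 = 0 := Finset.sum_eq_zero fun i _ => by
        rw [hval_one (hAD i).le, hall i, sub_self, zero_mul]
      have hder : HasDerivWithinAt g (2 * ergo c 1 a b cc d) (Ioo 0 1) 1 := by
        rw [ergo, Finset.mul_sum]
        refine (HasDerivWithinAt.fun_sum fun i _ => ?_).mono Ioo_subset_Icc_self
        simpa [hall i] using h21.hasDerivWithinAt_hval_one i
      obtain ⟨β₁, hβ₁, hlt⟩ := exists_mem_Ioo_lt_of_hasDerivWithinAt_pos one_pos hder (by linarith)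
      exact ⟨β₁, Ioo_subset_Ioc_self hβ₁, hg1 ▸ hlt⟩
    · obtain ⟨i₀, hi₀⟩ := not_forall.1 hall
      refine ⟨1, ⟨one_pos, le_rfl⟩, Finset.sum_neg' (fun i _ => ?_) ⟨i₀, Finset.mem_univ _, ?_⟩⟩
      · rw [hval_one (hAD i).le]
        rcases hx i with h | h <;> rw [h] <;> linarith [hAD i]
      · rw [hval_one (hAD i₀).le, (hx i₀).resolve_left hi₀]
        linarith [hAD i₀]
  obtain ⟨β₀, hβ₀, hgβ₀⟩ :=
    intermediate_value_Ioo' hβ₁.1.le (hcont.mono (Icc_subset_Icc_right hβ₁.2)) ⟨hgβ₁, hg0⟩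
  exact ⟨β₀, ⟨hβ₀.1, hβ₀.2.trans_le hβ₁.2⟩, hgβ₀⟩

/-- For `K = 1`, under Assumption 2.1 and the ergodicity condition (2.6), for every sign
vector `x ∈ {-1,1}^c` the equation `Σ_{i=1}^c h_i(β₀) = 0` has at least one root
`β₀ ∈ (0,1)`. -/
theorem stmt0 (c : ℕ) (hc : 1 ≤ c) (a b cc d : Fin c → ℕ → ℝ)
    (h21 : Assumption21 c 1 a b cc d) (herg : 0 < ergo c 1 a b cc d)
    (x : Fin c → ℝ) (hx : ∀ i, x i = 1 ∨ x i = -1) :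
    ∃ β₀ ∈ Set.Ioo (0 : ℝ) 1,
      ∑ i : Fin c, hval 1 (a i) (b i) (cc i) (d i) (x i) β₀ = 0 :=
  stmt0_general c a b cc d h21 herg x hx
end

section
/- Suppose K = 1 and that Assumption 2.1 and the ergodicity condition (2.6) hold. Let β̂₀ ∈ (0,1) satisfy Σ_{i=1}^c ĥ_i(β̂₀) = 0, where ĥ_i is formed with the sign vector x = (1,…,1). Then for every sign vector x ∈ {−1,1}^c with x_i = −1 for at least one i, every root β₀ ∈ (0,1) of Σ_{i=1}^c h_i(β₀) = 0 (with h_i formed with this x) satisfies β₀ < β̂₀. In particular the maximal root over all sign vectors is attained for x = (1,…,1). -/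
open scoped BigOperators

/-! ### Auxiliary lemmas -/

private lemma gm2 {w p q : ℝ} (hw : 0 ≤ w) (hw1 : w ≤ 1) (hp : 0 ≤ p) (hq : 0 ≤ q) :
    p ^ w * q ^ (1 - w) ≤ w * p + (1 - w) * q :=
  Real.geom_mean_le_arith_mean2_weighted hw (by linarith) hp hq (by ring)

private lemma summable_geom {e : ℕ → ℝ} (he : Summable e) (hn : ∀ m, 0 ≤ e m)
    {β : ℝ} (h0 : 0 ≤ β) (h1 : β ≤ 1) : Summable (fun m => e m * β ^ m) := by
  refine Summable.of_nonneg_of_le (fun m => mul_nonneg (hn m) (pow_nonneg h0 m))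
    (fun m => ?_) he
  calc e m * β ^ m ≤ e m * 1 :=
        mul_le_mul_of_nonneg_left (pow_le_one₀ h0 h1) (hn m)
    _ = e m := mul_one _

private lemma Gval_nonneg {e : ℕ → ℝ} (hn : ∀ m, 0 ≤ e m) {β : ℝ} (h0 : 0 ≤ β) :
    0 ≤ Gval e β :=
  tsum_nonneg fun m => mul_nonneg (hn m) (pow_nonneg h0 m)

private lemma Gone_nonneg {e : ℕ → ℝ} (hn : ∀ m, 0 ≤ e m) : 0 ≤ Gone e :=
  tsum_nonneg hn

private lemma Gval_one {e : ℕ → ℝ} : Gval e 1 = Gone e := by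
  simp [Gval, Gone]

private lemma Gval_pos {e : ℕ → ℝ} (he : Summable e) (hn : ∀ m, 0 ≤ e m)
    (hpos : 0 < Gone e) {β : ℝ} (h0 : 0 < β) (h1 : β ≤ 1) : 0 < Gval e β := by
  obtain ⟨m, hm⟩ : ∃ m, 0 < e m := by
    by_contra h
    push_neg at h
    have hz : ∀ m, e m = 0 := fun m => le_antisymm (h m) (hn m)
    have : Gone e = 0 := by simp [Gone, hz]
    rw [this] at hpos; exact lt_irrefl 0 hpos
  have h2 : e m * β ^ m ≤ Gval e β :=
    Summable.le_tsum (summable_geom he hn h0.le h1) m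
      (fun j _ => mul_nonneg (hn j) (pow_nonneg h0.le j))
  have h3 : 0 < e m * β ^ m := mul_pos hm (pow_pos h0 m)
  linarith

/-- `ĥ_i(1) = 0`. -/
private lemma hval_one_s3 (a b cc d : ℕ → ℝ)
    (nna : ∀ m, 0 ≤ a m) (nnd : ∀ m, 0 ≤ d m) :
    hval 1 a b cc d 1 1 = 0 := by
  have hA : 0 ≤ Gone a := Gone_nonneg nna
  have hD : 0 ≤ Gone d := Gone_nonneg nnd
  have h1 : Fval 1 a b cc d 1 = Gone a - Gone d := by
    simp [Fval, Gval_one]; ring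
  have h2 : Fval 1 a b cc d 1 ^ 2 + 4 * Gval a 1 * Gval d 1 = (Gone a + Gone d) ^ 2 := by
    rw [h1, Gval_one, Gval_one]; ring
  simp only [hval, pow_one, one_mul, Gval_one]
  rw [show Fval 1 a b cc d 1 ^ 2 + 4 * Gone a * Gone d = (Gone a + Gone d) ^ 2 by
    rw [h1]; ring]
  rw [Real.sqrt_sq (by linarith)]
  ring

/-- Termwise multiplicative-convexity bound for monomials. -/
private lemma mono1 {βh μ : ℝ} (hbh : 0 < βh) (hμ : 0 < μ) (hμ1 : μ ≤ 1) (m : ℕ) :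
    (βh ^ μ) ^ m ≤ μ * ((βh ^ μ / βh) * βh ^ m) + (1 - μ) * βh ^ μ := by
  have e1 : (βh ^ μ / βh) * βh ^ m = βh ^ (μ - 1 + m) := by
    rw [Real.rpow_add hbh, Real.rpow_sub hbh, Real.rpow_one, Real.rpow_natCast]
  have e2 : ((βh : ℝ) ^ μ) ^ m = βh ^ (μ * m) := by
    rw [Real.rpow_mul hbh.le, Real.rpow_natCast]
  have e3 : βh ^ (μ * m) = (βh ^ (μ - 1 + m)) ^ μ * (βh ^ μ) ^ (1 - μ) := by
    rw [← Real.rpow_mul hbh.le, ← Real.rpow_mul hbh.le, ← Real.rpow_add hbh]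
    ring_nf
  rw [e1, e2, e3]
  exact gm2 hμ.le hμ1 (Real.rpow_nonneg hbh.le _) (Real.rpow_nonneg hbh.le _)

/-- Multiplicative-convexity ("chord in log-coordinates") bound for a power series. -/
private lemma ser {e : ℕ → ℝ} (he : Summable e) (hn : ∀ m, 0 ≤ e m)
    {βh μ : ℝ} (hbh : 0 < βh) (hbh1 : βh ≤ 1) (hμ : 0 < μ) (hμ1 : μ ≤ 1) :
    Gval e (βh ^ μ) ≤ μ * (βh ^ μ / βh) * Gval e βh + (1 - μ) * βh ^ μ * Gone e := by
  have hb0 : 0 < βh ^ μ := Real.rpow_pos_of_pos hbh μ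
  have hb01 : βh ^ μ ≤ 1 := Real.rpow_le_one hbh.le hbh1 hμ.le
  have s1 : Summable (fun m => e m * βh ^ m) := summable_geom he hn hbh.le hbh1
  have s0 : Summable (fun m => e m * (βh ^ μ) ^ m) := summable_geom he hn hb0.le hb01
  have s2 : Summable (fun m =>
      μ * (βh ^ μ / βh) * (e m * βh ^ m) + (1 - μ) * βh ^ μ * e m) :=
    (s1.mul_left _).add (he.mul_left _)
  have h3 : ∀ m, e m * (βh ^ μ) ^ m ≤
      μ * (βh ^ μ / βh) * (e m * βh ^ m) + (1 - μ) * βh ^ μ * e m := by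
    intro m
    have h4 := mul_le_mul_of_nonneg_left (mono1 hbh hμ hμ1 m) (hn m)
    calc e m * (βh ^ μ) ^ m
        ≤ e m * (μ * ((βh ^ μ / βh) * βh ^ m) + (1 - μ) * βh ^ μ) := h4
      _ = μ * (βh ^ μ / βh) * (e m * βh ^ m) + (1 - μ) * βh ^ μ * e m := by ring
  calc Gval e (βh ^ μ)
      ≤ ∑' m, (μ * (βh ^ μ / βh) * (e m * βh ^ m) + (1 - μ) * βh ^ μ * e m) :=
        Summable.tsum_le_tsum h3 s0 s2
    _ = μ * (βh ^ μ / βh) * Gval e βh + (1 - μ) * βh ^ μ * Gone e := by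
        rw [Summable.tsum_add (s1.mul_left _) (he.mul_left _), tsum_mul_left, tsum_mul_left]
        rfl

/-- Hölder-type bound: `A(βh^μ) ≤ A(βh)^μ · A(1)^{1-μ}`. -/
private lemma hold {e : ℕ → ℝ} (he : Summable e) (hn : ∀ m, 0 ≤ e m)
    (hpos : 0 < Gone e) {βh μ : ℝ} (hbh : 0 < βh) (hbh1 : βh ≤ 1)
    (hμ : 0 < μ) (hμ1 : μ ≤ 1) :
    Gval e (βh ^ μ) ≤ (Gval e βh) ^ μ * (Gone e) ^ (1 - μ) := by
  have hb0 : 0 < βh ^ μ := Real.rpow_pos_of_pos hbh μ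
  have hb01 : βh ^ μ ≤ 1 := Real.rpow_le_one hbh.le hbh1 hμ.le
  set X := Gval e βh with hXdef
  set Y := Gone e with hYdef
  have hX : 0 < X := Gval_pos he hn hpos hbh hbh1
  have hXY : 0 < X ^ μ * Y ^ (1 - μ) :=
    mul_pos (Real.rpow_pos_of_pos hX μ) (Real.rpow_pos_of_pos hpos _)
  have s1 : Summable (fun m => e m * βh ^ m) := summable_geom he hn hbh.le hbh1
  have s0 : Summable (fun m => e m * (βh ^ μ) ^ m) := summable_geom he hn hb0.le hb01
  have term : ∀ m, e m * (βh ^ μ) ^ m ≤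
      (X ^ μ * Y ^ (1 - μ) * μ / X) * (e m * βh ^ m)
        + (X ^ μ * Y ^ (1 - μ) * (1 - μ) / Y) * e m := by
    intro m
    have hbm : (0:ℝ) ≤ βh ^ m := pow_nonneg hbh.le m
    have hgm : ((e m * βh ^ m) / X) ^ μ * ((e m) / Y) ^ (1 - μ) ≤
        μ * ((e m * βh ^ m) / X) + (1 - μ) * (e m / Y) :=
      gm2 hμ.le hμ1 (div_nonneg (mul_nonneg (hn m) hbm) hX.le)
        (div_nonneg (hn m) hpos.le)
    have hid : e m * (βh ^ μ) ^ m = (e m * βh ^ m) ^ μ * (e m) ^ (1 - μ) := by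
      rw [Real.mul_rpow (hn m) hbm]
      have h5 : ((βh : ℝ) ^ m) ^ μ = (βh ^ μ) ^ m := by
        rw [← Real.rpow_natCast βh m, ← Real.rpow_mul hbh.le, mul_comm,
          Real.rpow_mul hbh.le, Real.rpow_natCast]
      have h6 : (e m) ^ μ * (e m) ^ (1 - μ) = e m := by
        have hone : μ + (1 - μ) = 1 := by ring
        rw [← Real.rpow_add' (hn m) (by rw [hone]; norm_num), hone, Real.rpow_one]
      calc e m * (βh ^ μ) ^ m = ((e m) ^ μ * (e m) ^ (1 - μ)) * (βh ^ μ) ^ m := by rw [h6]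
        _ = (e m) ^ μ * ((βh:ℝ) ^ m) ^ μ * (e m) ^ (1 - μ) := by rw [h5]; ring
    have hlhs : e m * (βh ^ μ) ^ m =
        (X ^ μ * Y ^ (1 - μ)) * (((e m * βh ^ m) / X) ^ μ * ((e m) / Y) ^ (1 - μ)) := by
      rw [Real.div_rpow (mul_nonneg (hn m) hbm) hX.le, Real.div_rpow (hn m) hpos.le, hid]
      field_simp
    calc e m * (βh ^ μ) ^ m
        = (X ^ μ * Y ^ (1 - μ)) * (((e m * βh ^ m) / X) ^ μ * ((e m) / Y) ^ (1 - μ)) := hlhs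
      _ ≤ (X ^ μ * Y ^ (1 - μ)) * (μ * ((e m * βh ^ m) / X) + (1 - μ) * (e m / Y)) :=
          mul_le_mul_of_nonneg_left hgm hXY.le
      _ = (X ^ μ * Y ^ (1 - μ) * μ / X) * (e m * βh ^ m)
            + (X ^ μ * Y ^ (1 - μ) * (1 - μ) / Y) * e m := by ring
  have s2 : Summable (fun m =>
      (X ^ μ * Y ^ (1 - μ) * μ / X) * (e m * βh ^ m)
        + (X ^ μ * Y ^ (1 - μ) * (1 - μ) / Y) * e m) :=
    (s1.mul_left _).add (he.mul_left _)
  have hfin : Gval e (βh ^ μ) ≤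
      (X ^ μ * Y ^ (1 - μ) * μ / X) * X + (X ^ μ * Y ^ (1 - μ) * (1 - μ) / Y) * Y := by
    calc Gval e (βh ^ μ)
        ≤ ∑' m, ((X ^ μ * Y ^ (1 - μ) * μ / X) * (e m * βh ^ m)
            + (X ^ μ * Y ^ (1 - μ) * (1 - μ) / Y) * e m) := Summable.tsum_le_tsum term s0 s2
      _ = (X ^ μ * Y ^ (1 - μ) * μ / X) * X + (X ^ μ * Y ^ (1 - μ) * (1 - μ) / Y) * Y := by
          rw [Summable.tsum_add (s1.mul_left _) (he.mul_left _), tsum_mul_left, tsum_mul_left]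
          rfl
  calc Gval e (βh ^ μ) ≤ _ := hfin
    _ = X ^ μ * Y ^ (1 - μ) := by field_simp; ring

/-- Multiplicative-convexity bound for `√(A(β)D(β))`. -/
private lemma Wconv {a d : ℕ → ℝ} (sa : Summable a) (sd : Summable d)
    (nna : ∀ m, 0 ≤ a m) (nnd : ∀ m, 0 ≤ d m)
    (pA : 0 < Gone a) (pD : 0 < Gone d)
    {βh μ : ℝ} (hbh : 0 < βh) (hbh1 : βh ≤ 1) (hμ : 0 < μ) (hμ1 : μ ≤ 1) :
    Real.sqrt (Gval a (βh ^ μ) * Gval d (βh ^ μ)) ≤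
      μ * (βh ^ μ / βh) * Real.sqrt (Gval a βh * Gval d βh)
        + (1 - μ) * βh ^ μ * Real.sqrt (Gone a * Gone d) := by
  have hb0 : 0 < βh ^ μ := Real.rpow_pos_of_pos hbh μ
  set XA := Gval a βh with hXA
  set XD := Gval d βh with hXD
  set YA := Gone a with hYA
  set YD := Gone d with hYD
  have hXApos : 0 < XA := Gval_pos sa nna pA hbh hbh1
  have hXDpos : 0 < XD := Gval_pos sd nnd pD hbh hbh1
  have h1 : Gval a (βh ^ μ) * Gval d (βh ^ μ) ≤ (XA * XD) ^ μ * (YA * YD) ^ (1 - μ) := by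
    have ha := hold sa nna pA hbh hbh1 hμ hμ1
    have hd := hold sd nnd pD hbh hbh1 hμ hμ1
    have h2 : Gval a (βh ^ μ) * Gval d (βh ^ μ) ≤
        (XA ^ μ * YA ^ (1 - μ)) * (XD ^ μ * YD ^ (1 - μ)) := by
      apply mul_le_mul ha hd (Gval_nonneg nnd hb0.le)
      positivity
    calc Gval a (βh ^ μ) * Gval d (βh ^ μ)
        ≤ (XA ^ μ * YA ^ (1 - μ)) * (XD ^ μ * YD ^ (1 - μ)) := h2
      _ = (XA * XD) ^ μ * (YA * YD) ^ (1 - μ) := by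
          rw [Real.mul_rpow hXApos.le hXDpos.le, Real.mul_rpow pA.le pD.le]
          ring
  have h3 : Real.sqrt (Gval a (βh ^ μ) * Gval d (βh ^ μ)) ≤
      Real.sqrt ((XA * XD) ^ μ * (YA * YD) ^ (1 - μ)) := Real.sqrt_le_sqrt h1
  have h4 : Real.sqrt ((XA * XD) ^ μ * (YA * YD) ^ (1 - μ)) =
      (Real.sqrt (XA * XD)) ^ μ * (Real.sqrt (YA * YD)) ^ (1 - μ) := by
    have hxx : (0:ℝ) ≤ XA * XD := by positivity
    have hyy : (0:ℝ) ≤ YA * YD := by positivity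
    rw [Real.sqrt_eq_rpow, Real.sqrt_eq_rpow, Real.sqrt_eq_rpow,
      Real.mul_rpow (Real.rpow_nonneg hxx _) (Real.rpow_nonneg hyy _),
      ← Real.rpow_mul hxx, ← Real.rpow_mul hyy, ← Real.rpow_mul hxx, ← Real.rpow_mul hyy,
      mul_comm μ (1/2), mul_comm (1 - μ) (1/2)]
  have hscal : (βh ^ μ / βh) ^ μ * (βh ^ μ) ^ (1 - μ) = 1 := by
    have e1 : βh ^ μ / βh = βh ^ (μ - 1) := by
      rw [Real.rpow_sub hbh, Real.rpow_one]
    rw [e1, ← Real.rpow_mul hbh.le, ← Real.rpow_mul hbh.le, ← Real.rpow_add hbh]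
    have : (μ - 1) * μ + μ * (1 - μ) = 0 := by ring
    rw [this, Real.rpow_zero]
  have h5 : (Real.sqrt (XA * XD)) ^ μ * (Real.sqrt (YA * YD)) ^ (1 - μ) ≤
      μ * (βh ^ μ / βh) * Real.sqrt (XA * XD) + (1 - μ) * βh ^ μ * Real.sqrt (YA * YD) := by
    have hp : (0:ℝ) ≤ (βh ^ μ / βh) * Real.sqrt (XA * XD) := by positivity
    have hq : (0:ℝ) ≤ βh ^ μ * Real.sqrt (YA * YD) := by positivity
    have := gm2 hμ.le hμ1 hp hq
    calc (Real.sqrt (XA * XD)) ^ μ * (Real.sqrt (YA * YD)) ^ (1 - μ)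
        = ((βh ^ μ / βh) * Real.sqrt (XA * XD)) ^ μ * (βh ^ μ * Real.sqrt (YA * YD)) ^ (1 - μ) := by
          rw [Real.mul_rpow (by positivity) (Real.sqrt_nonneg _),
            Real.mul_rpow (by positivity) (Real.sqrt_nonneg _)]
          calc (Real.sqrt (XA * XD)) ^ μ * (Real.sqrt (YA * YD)) ^ (1 - μ)
              = ((βh ^ μ / βh) ^ μ * (βh ^ μ) ^ (1 - μ)) *
                  ((Real.sqrt (XA * XD)) ^ μ * (Real.sqrt (YA * YD)) ^ (1 - μ)) := by
                rw [hscal, one_mul]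
            _ = (βh ^ μ / βh) ^ μ * (Real.sqrt (XA * XD)) ^ μ *
                  ((βh ^ μ) ^ (1 - μ) * (Real.sqrt (YA * YD)) ^ (1 - μ)) := by ring
      _ ≤ μ * ((βh ^ μ / βh) * Real.sqrt (XA * XD)) + (1 - μ) * (βh ^ μ * Real.sqrt (YA * YD)) :=
          this
      _ = μ * (βh ^ μ / βh) * Real.sqrt (XA * XD) + (1 - μ) * βh ^ μ * Real.sqrt (YA * YD) := by
          ring
  calc Real.sqrt (Gval a (βh ^ μ) * Gval d (βh ^ μ))
      ≤ Real.sqrt ((XA * XD) ^ μ * (YA * YD) ^ (1 - μ)) := h3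
    _ = (Real.sqrt (XA * XD)) ^ μ * (Real.sqrt (YA * YD)) ^ (1 - μ) := h4
    _ ≤ _ := h5

set_option maxHeartbeats 1000000 in
/-- The per-`i` key inequality : multiplicative convexity of `ĥ/β` through the
points `βh^μ`, `βh`, `1`. -/
private lemma key {a b cc d : ℕ → ℝ}
    (nna : ∀ m, 0 ≤ a m) (nnb : ∀ m, 0 ≤ b m) (nnc : ∀ m, 0 ≤ cc m) (nnd : ∀ m, 0 ≤ d m)
    (sa : Summable a) (sb : Summable b) (sc : Summable cc) (sd : Summable d)
    (pA : 0 < Gone a) (pD : 0 < Gone d)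
    {βh μ : ℝ} (hbh : 0 < βh) (hbh1 : βh ≤ 1) (hμ : 0 < μ) (hμ1 : μ ≤ 1) :
    hval 1 a b cc d 1 (βh ^ μ) ≤
      μ * (βh ^ μ / βh) * hval 1 a b cc d 1 βh + (1 - μ) * βh ^ μ * hval 1 a b cc d 1 1 := by
  have hb0 : 0 < βh ^ μ := Real.rpow_pos_of_pos hbh μ
  have hb01 : βh ^ μ ≤ 1 := Real.rpow_le_one hbh.le hbh1 hμ.le
  obtain ⟨β0, hβ0def⟩ : ∃ β0 : ℝ, β0 = βh ^ μ := ⟨_, rfl⟩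
  rw [← hβ0def] at hb0 hb01 ⊢
  obtain ⟨T, hTdef⟩ : ∃ T : ℝ, T = Gone a + Gone b + Gone cc + Gone d := ⟨_, rfl⟩
  have hF : ∀ β : ℝ, Fval 1 a b cc d β =
      β * (Gone a + Gone b - Gone cc - Gone d) - Gval b β + Gval cc β := by
    intro β; simp [Fval]
  have hh : ∀ β : ℝ, hval 1 a b cc d 1 β =
      Real.sqrt (Fval 1 a b cc d β ^ 2 + 4 * Gval a β * Gval d β)
        + Gval b β + Gval cc β - β * T := by
    intro β; rw [hTdef]; simp only [hval, pow_one, one_mul]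
  -- positivity at β0
  have hA0 : 0 < Gval a β0 := Gval_pos sa nna pA hb0 hb01
  have hD0 : 0 < Gval d β0 := Gval_pos sd nnd pD hb0 hb01
  have hAD0 : 0 < Gval a β0 * Gval d β0 := mul_pos hA0 hD0
  obtain ⟨F0, hF0def⟩ : ∃ F0 : ℝ, F0 = Fval 1 a b cc d β0 := ⟨_, rfl⟩
  obtain ⟨S0, hS0def⟩ : ∃ S0 : ℝ, S0 = Real.sqrt (F0 ^ 2 + 4 * Gval a β0 * Gval d β0) :=
    ⟨_, rfl⟩
  have hS0pos : 0 < S0 := by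
    rw [hS0def]
    apply Real.sqrt_pos.mpr
    nlinarith [sq_nonneg F0]
  have hS0sq : S0 ^ 2 = F0 ^ 2 + 4 * Gval a β0 * Gval d β0 := by
    rw [hS0def]
    exact Real.sq_sqrt (by nlinarith [sq_nonneg F0])
  obtain ⟨W0, hW0def⟩ : ∃ W0 : ℝ, W0 = Real.sqrt (Gval a β0 * Gval d β0) := ⟨_, rfl⟩
  have hW0sq : W0 ^ 2 = Gval a β0 * Gval d β0 := by
    rw [hW0def]; exact Real.sq_sqrt hAD0.le
  obtain ⟨xf, hxfdef⟩ : ∃ xf : ℝ, xf = F0 / S0 := ⟨_, rfl⟩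
  obtain ⟨yf, hyfdef⟩ : ∃ yf : ℝ, yf = 2 * W0 / S0 := ⟨_, rfl⟩
  have hW0nn : 0 ≤ W0 := by rw [hW0def]; exact Real.sqrt_nonneg _
  have hyf : 0 ≤ yf := by rw [hyfdef]; positivity
  have hnum : F0 ^ 2 + 4 * (Gval a β0 * Gval d β0) = S0 ^ 2 := by rw [hS0sq]; ring
  have hx2 : xf ^ 2 + yf ^ 2 = 1 := by
    have h11 : xf ^ 2 + yf ^ 2 = (F0 ^ 2 + 4 * W0 ^ 2) / S0 ^ 2 := by
      rw [hxfdef, hyfdef]; ring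
    rw [h11, hW0sq, hnum]
    exact div_self (by positivity)
  have hxf1 : xf ≤ 1 := by nlinarith [sq_nonneg yf]
  have hxfm : -1 ≤ xf := by nlinarith [sq_nonneg yf]
  -- Cauchy–Schwarz domination at any β with nonneg AD
  have cs : ∀ β : ℝ, 0 ≤ Gval a β * Gval d β →
      xf * Fval 1 a b cc d β + yf * (2 * Real.sqrt (Gval a β * Gval d β)) ≤
        Real.sqrt (Fval 1 a b cc d β ^ 2 + 4 * Gval a β * Gval d β) := by
    intro β hADβ
    obtain ⟨Fβ, hFβdef⟩ : ∃ Fβ : ℝ, Fβ = Fval 1 a b cc d β := ⟨_, rfl⟩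
    obtain ⟨Wβ, hWβdef⟩ : ∃ Wβ : ℝ, Wβ = Real.sqrt (Gval a β * Gval d β) := ⟨_, rfl⟩
    rw [← hFβdef, ← hWβdef]
    have hWβsq : Wβ ^ 2 = Gval a β * Gval d β := by
      rw [hWβdef]; exact Real.sq_sqrt hADβ
    have hsq : (xf * Fβ + yf * (2 * Wβ)) ^ 2 ≤ Fβ ^ 2 + 4 * Gval a β * Gval d β := by
      nlinarith [sq_nonneg (yf * Fβ - xf * (2 * Wβ)), hx2, hWβsq]
    calc xf * Fβ + yf * (2 * Wβ) ≤ |xf * Fβ + yf * (2 * Wβ)| := le_abs_self _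
      _ = Real.sqrt ((xf * Fβ + yf * (2 * Wβ)) ^ 2) := (Real.sqrt_sq_eq_abs _).symm
      _ ≤ Real.sqrt (Fβ ^ 2 + 4 * Gval a β * Gval d β) := Real.sqrt_le_sqrt hsq
  -- equality at β0
  have heq0 : xf * F0 + yf * (2 * W0) = S0 := by
    have h9 : xf * F0 + yf * (2 * W0) = (F0 ^ 2 + 4 * W0 ^ 2) / S0 := by
      rw [hxfdef, hyfdef]; ring
    rw [h9, hW0sq, hnum, sq, mul_div_assoc, div_self hS0pos.ne', mul_one]
  -- the auxiliary linear functional Λ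
  obtain ⟨κ, hκdef⟩ : ∃ κ : ℝ, κ = xf * (Gone a + Gone b - Gone cc - Gone d) - T := ⟨_, rfl⟩
  have hΛ : ∀ β : ℝ,
      xf * Fval 1 a b cc d β + yf * (2 * Real.sqrt (Gval a β * Gval d β))
        + Gval b β + Gval cc β - β * T =
      (1 + xf) * Gval cc β + (1 - xf) * Gval b β
        + (2 * yf) * Real.sqrt (Gval a β * Gval d β) + κ * β := by
    intro β
    rw [hF β, hκdef]
    ring
  -- convexity pieces
  have hserC := ser sc nnc hbh hbh1 hμ hμ1
  have hserB := ser sb nnb hbh hbh1 hμ hμ1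
  have hWc := Wconv sa sd nna nnd pA pD hbh hbh1 hμ hμ1
  rw [← hβ0def] at hserC hserB hWc
  have hdiv : β0 / βh * βh = β0 := div_mul_cancel₀ _ hbh.ne'
  have hlin : κ * β0 = μ * (β0 / βh) * (κ * βh) + (1 - μ) * β0 * κ :=
    by linear_combination (-(μ * κ)) * hdiv
  have h1p : (0:ℝ) ≤ 1 + xf := by linarith
  have h1m : (0:ℝ) ≤ 1 - xf := by linarith
  have h2y : (0:ℝ) ≤ 2 * yf := by linarith
  have hC' := mul_le_mul_of_nonneg_left hserC h1p
  have hB' := mul_le_mul_of_nonneg_left hserB h1m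
  have hW' := mul_le_mul_of_nonneg_left hWc h2y
  -- Λ(β0) ≤ μ (β0/βh) Λ(βh) + (1-μ) β0 Λ(1)
  have hstep3 :
      (1 + xf) * Gval cc β0 + (1 - xf) * Gval b β0
        + (2 * yf) * Real.sqrt (Gval a β0 * Gval d β0) + κ * β0 ≤
      μ * (β0 / βh) * ((1 + xf) * Gval cc βh + (1 - xf) * Gval b βh
          + (2 * yf) * Real.sqrt (Gval a βh * Gval d βh) + κ * βh)
        + (1 - μ) * β0 * ((1 + xf) * Gone cc + (1 - xf) * Gone b
          + (2 * yf) * Real.sqrt (Gone a * Gone d) + κ * 1) := by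
    calc (1 + xf) * Gval cc β0 + (1 - xf) * Gval b β0
        + (2 * yf) * Real.sqrt (Gval a β0 * Gval d β0) + κ * β0
        ≤ (1 + xf) * (μ * (β0 / βh) * Gval cc βh + (1 - μ) * β0 * Gone cc)
          + (1 - xf) * (μ * (β0 / βh) * Gval b βh + (1 - μ) * β0 * Gone b)
          + (2 * yf) * (μ * (β0 / βh) * Real.sqrt (Gval a βh * Gval d βh)
              + (1 - μ) * β0 * Real.sqrt (Gone a * Gone d))
          + (μ * (β0 / βh) * (κ * βh) + (1 - μ) * β0 * κ) := by
          linarith [hC', hB', hW', hlin]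
      _ = _ := by ring
  -- assemble
  have hfinal0 : hval 1 a b cc d 1 β0 =
      (1 + xf) * Gval cc β0 + (1 - xf) * Gval b β0
        + (2 * yf) * Real.sqrt (Gval a β0 * Gval d β0) + κ * β0 := by
    have h10 := hΛ β0
    rw [hh β0, ← hF0def, ← hS0def, ← heq0]
    rw [← hF0def] at h10
    rw [← hW0def] at h10 ⊢
    linarith [h10]
  have hdomh : (1 + xf) * Gval cc βh + (1 - xf) * Gval b βh
      + (2 * yf) * Real.sqrt (Gval a βh * Gval d βh) + κ * βh ≤ hval 1 a b cc d 1 βh := by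
    have hADh : 0 ≤ Gval a βh * Gval d βh :=
      mul_nonneg (Gval_nonneg nna hbh.le) (Gval_nonneg nnd hbh.le)
    have hcs := cs βh hADh
    have h10 := hΛ βh
    rw [hh βh]
    linarith [hcs, h10.ge, h10.le]
  have hdom1 : (1 + xf) * Gone cc + (1 - xf) * Gone b
      + (2 * yf) * Real.sqrt (Gone a * Gone d) + κ * 1 ≤ hval 1 a b cc d 1 1 := by
    have hAD1 : 0 ≤ Gval a 1 * Gval d 1 :=
      mul_nonneg (Gval_nonneg nna zero_le_one) (Gval_nonneg nnd zero_le_one)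
    have hcs := cs 1 hAD1
    have h10 := hΛ 1
    simp only [Gval_one] at h10 hcs
    rw [hh 1]
    simp only [Gval_one]
    linarith [hcs, h10.ge, h10.le]
  have hc1 : (0:ℝ) ≤ μ * (β0 / βh) := by positivity
  have hc2 : (0:ℝ) ≤ (1 - μ) * β0 := by
    have h12 : (0:ℝ) ≤ 1 - μ := by linarith
    positivity
  have t1 := mul_le_mul_of_nonneg_left hdomh hc1
  have t2 := mul_le_mul_of_nonneg_left hdom1 hc2
  rw [hh β0, ← hF0def, ← hS0def, ← heq0]
  have h13 := hΛ β0
  rw [← hF0def, ← hW0def] at h13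
  rw [← hW0def] at hstep3
  calc xf * F0 + yf * (2 * W0) + Gval b β0 + Gval cc β0 - β0 * T
      = (1 + xf) * Gval cc β0 + (1 - xf) * Gval b β0 + 2 * yf * W0 + κ * β0 := h13
    _ ≤ μ * (β0 / βh) * ((1 + xf) * Gval cc βh + (1 - xf) * Gval b βh
          + 2 * yf * Real.sqrt (Gval a βh * Gval d βh) + κ * βh)
        + (1 - μ) * β0 * ((1 + xf) * Gone cc + (1 - xf) * Gone b
          + 2 * yf * Real.sqrt (Gone a * Gone d) + κ * 1) := hstep3
    _ ≤ μ * (β0 / βh) * hval 1 a b cc d 1 βh + (1 - μ) * β0 * hval 1 a b cc d 1 1 :=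
        add_le_add t1 t2

set_option maxHeartbeats 1000000 in
/-- For `K = 1`, under Assumption 2.1 and the ergodicity condition (2.6): if
`β̂₀ ∈ (0,1)` is a root of `Σ_i ĥ_i = 0` for the all-ones sign vector, then for every
sign vector with at least one `x_i = -1`, every root `β₀ ∈ (0,1)` of `Σ_i h_i = 0`
satisfies `β₀ < β̂₀`; i.e. the maximal root is attained for `x = (1,…,1)`. -/
theorem stmt3 (c : ℕ) (hc : 1 ≤ c) (a b cc d : Fin c → ℕ → ℝ)
    (h21 : Assumption21 c 1 a b cc d) (herg : 0 < ergo c 1 a b cc d)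
    (βhat : ℝ) (hβhat : βhat ∈ Set.Ioo (0 : ℝ) 1)
    (hβhatroot : ∑ i : Fin c, hval 1 (a i) (b i) (cc i) (d i) 1 βhat = 0)
    (x : Fin c → ℝ) (hx : ∀ i, x i = 1 ∨ x i = -1) (hxneg : ∃ i, x i = -1)
    (β₀ : ℝ) (hβ₀ : β₀ ∈ Set.Ioo (0 : ℝ) 1)
    (hβ₀root : ∑ i : Fin c, hval 1 (a i) (b i) (cc i) (d i) (x i) β₀ = 0) :
    β₀ < βhat := by
  obtain ⟨hb0p, hb0l⟩ := hβ₀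
  obtain ⟨hbhp, hbhl⟩ := hβhat
  by_contra hcon
  push_neg at hcon
  -- hcon : βhat ≤ β₀
  have hlogh : Real.log βhat < 0 := Real.log_neg hbhp hbhl
  have hlog0 : Real.log β₀ < 0 := Real.log_neg hb0p hb0l
  have hle : Real.log βhat ≤ Real.log β₀ := Real.log_le_log hbhp hcon
  set μ := Real.log β₀ / Real.log βhat with hμdef
  have hμpos : 0 < μ := div_pos_iff.mpr (Or.inr ⟨hlog0, hlogh⟩)
  have hμmul : μ * Real.log βhat = Real.log β₀ :=
    div_mul_cancel₀ _ (ne_of_lt hlogh)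
  have hμ1 : μ ≤ 1 := by
    by_contra hμgt
    push_neg at hμgt
    have : μ * Real.log βhat < 1 * Real.log βhat :=
      mul_lt_mul_of_neg_right hμgt hlogh
    rw [one_mul, hμmul] at this
    linarith
  have hrepr : βhat ^ μ = β₀ := by
    rw [Real.rpow_def_of_pos hbhp]
    have : Real.log βhat * μ = Real.log β₀ := by rw [mul_comm]; exact hμmul
    rw [this, Real.exp_log hb0p]
  -- the sum of ĥ_i at β₀ is nonpositive
  have hone : ∀ i : Fin c, hval 1 (a i) (b i) (cc i) (d i) 1 1 = 0 := fun i =>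
    hval_one_s3 _ _ _ _ (h21.nna i) (h21.nnd i)
  have hsum_le : ∑ i : Fin c, hval 1 (a i) (b i) (cc i) (d i) 1 β₀ ≤ 0 := by
    have hkey : ∀ i : Fin c, hval 1 (a i) (b i) (cc i) (d i) 1 β₀ ≤
        μ * (β₀ / βhat) * hval 1 (a i) (b i) (cc i) (d i) 1 βhat := by
      intro i
      have := key (h21.nna i) (h21.nnb i) (h21.nnc i) (h21.nnd i)
        (h21.suma i) (h21.sumb i) (h21.sumc i) (h21.sumd i)
        (h21.posA i) (h21.posD i) hbhp (le_of_lt hbhl) hμpos hμ1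
      rw [hrepr, hone i, mul_zero] at this
      linarith
    calc ∑ i : Fin c, hval 1 (a i) (b i) (cc i) (d i) 1 β₀
        ≤ ∑ i : Fin c, μ * (β₀ / βhat) * hval 1 (a i) (b i) (cc i) (d i) 1 βhat :=
          Finset.sum_le_sum fun i _ => hkey i
      _ = μ * (β₀ / βhat) * ∑ i : Fin c, hval 1 (a i) (b i) (cc i) (d i) 1 βhat := by
          rw [Finset.mul_sum]
      _ = 0 := by rw [hβhatroot, mul_zero]
  -- the sum of ĥ_i at β₀ is strictly positive
  have hsum_pos : 0 < ∑ i : Fin c, hval 1 (a i) (b i) (cc i) (d i) 1 β₀ := by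
    rw [← hβ₀root]
    apply Finset.sum_lt_sum
    · intro i _
      have hS : 0 ≤ Real.sqrt (Fval 1 (a i) (b i) (cc i) (d i) β₀ ^ 2
          + 4 * Gval (a i) β₀ * Gval (d i) β₀) := Real.sqrt_nonneg _
      have hxi : x i ≤ 1 := by rcases hx i with h | h <;> rw [h] <;> norm_num
      simp only [hval]
      have := mul_le_mul_of_nonneg_right hxi hS
      linarith
    · obtain ⟨i0, hi0⟩ := hxneg
      refine ⟨i0, Finset.mem_univ _, ?_⟩
      have hA0 : 0 < Gval (a i0) β₀ :=
        Gval_pos (h21.suma i0) (h21.nna i0) (h21.posA i0) hb0p (le_of_lt hb0l)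
      have hD0 : 0 < Gval (d i0) β₀ :=
        Gval_pos (h21.sumd i0) (h21.nnd i0) (h21.posD i0) hb0p (le_of_lt hb0l)
      have hSpos : 0 < Real.sqrt (Fval 1 (a i0) (b i0) (cc i0) (d i0) β₀ ^ 2
          + 4 * Gval (a i0) β₀ * Gval (d i0) β₀) := by
        apply Real.sqrt_pos.mpr
        nlinarith [sq_nonneg (Fval 1 (a i0) (b i0) (cc i0) (d i0) β₀)]
      simp only [hval, hi0]
      nlinarith [hSpos]
  linarith
end

section
/- Let c ≥ 1 be an integer, J a finite index set, and for each i ∈ {1,…,c} let P_i, Q_i : ℂ → ℂ be functions. For each j ∈ J let β_{0,j} ∈ ℂ and a sign vector x^{(j)} ∈ {−1,1}^c be given such that the map j ↦ (β_{0,j}, x^{(j)}) is injective, and set β_{i,j} = P_i(β_{0,j}) + x^{(j)}_i · Q_i(β_{0,j}) for i = 1,…,c, where Q_i(β_{0,j}) ≠ 0 for all i and j. Then the functions p_j : ℕ × {0,1}^c → ℂ given by p_j(n₀, n) = β_{0,j}^{n₀} · Π_{i=1}^c β_{i,j}^{n_i} are linearly independent: if α_j ∈ ℂ satisfy Σ_{j∈J}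 α_j p_j(n₀,n) = 0 for all n₀ ∈ ℕ and all n ∈ {0,1}^c, then α_j = 0 for every j ∈ J. -/
/-!
Fix `j₀` and put `a_i = P_i(β_{0,j₀}) - x^{(j₀)}_i Q_i(β_{0,j₀})`, the other root of the
`i`-th coordinate over `β_{0,j₀}`. Since `n ∈ {0,1}^c`, the relation is multilinear in the
`β_{i,j}`, so it still holds with `∏_i β_{i,j}^{n_i}` replaced by `∏_i (β_{i,j} - a_i)`, and, being
valid for every `n₀`, with `β_{0,j}^{n₀}` replaced by a polynomial vanishing at every `β_{0,j} ≠ β_{0,j₀}`.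
This leaves the `j` with `β_{0,j} = β_{0,j₀}`; by injectivity every such `j ≠ j₀` has some
`x^{(j)}_i = -x^{(j₀)}_i`, i.e. `β_{i,j} = a_i`, so only `α_{j₀} ∏_i 2 x^{(j₀)}_i Q_i(β_{0,j₀})` survives.
-/

open Finset Polynomial

section

variable {ι J : Type*} [Fintype ι] [Fintype J]

theorem sum_mul_prod_sub_eq_zero {R : Type*} [CommRing R] (w : J → R) (b : ι → J → R)
    (h : ∀ t : Finset ι, ∑ j, w j * ∏ i ∈ t, b i j = 0) (a : ι → R) :
    ∑ j, w j * ∏ i, (b i j - a i) = 0 := by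
  classical
  simp_rw [prod_sub, mul_sum, sum_comm (s := univ) (t := univ.powerset)]
  refine sum_eq_zero fun t _ => ?_
  calc ∑ j, w j * ((-1) ^ #t * (∏ i ∈ univ \ t, b i j) * ∏ i ∈ t, a i)
      = (-1) ^ #t * (∏ i ∈ t, a i) * ∑ j, w j * ∏ i ∈ univ \ t, b i j := by
        rw [mul_sum]; exact sum_congr rfl fun j _ => by ring
    _ = 0 := by rw [h, mul_zero]

theorem sum_mul_eval_eq_zero {R : Type*} [CommSemiring R] (w z : J → R)
    (h : ∀ k : ℕ, ∑ j, w j * z j ^ k = 0) (f : R[X]) :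
    ∑ j, w j * f.eval (z j) = 0 := by
  simp_rw [eval_eq_sum_range, mul_sum, sum_comm (s := univ)]
  refine sum_eq_zero fun k _ => ?_
  calc ∑ j, w j * (f.coeff k * z j ^ k) = f.coeff k * ∑ j, w j * z j ^ k := by
        rw [mul_sum]; exact sum_congr rfl fun j _ => by ring
    _ = 0 := by rw [h, mul_zero]

/-- Moment vanishing separates the fibres: multiply by `∏ (X - b)` over the other values of `z`. -/
theorem sum_fiber_eq_zero_of_sum_mul_pow_eq_zero {K : Type*} [Field K] [DecidableEq K]
    (w z : J → K) (h : ∀ k : ℕ, ∑ j, w j * z j ^ k = 0) (z₀ : K) :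
    ∑ j with z j = z₀, w j = 0 := by
  set f : K[X] := ∏ b ∈ (univ.image z).erase z₀, (X - C b)
  have hf : ∀ y, f.eval y = ∏ b ∈ (univ.image z).erase z₀, (y - b) := by
    intro y; simp [f, eval_prod]
  have hf₀ : f.eval z₀ ≠ 0 := by
    rw [hf]
    exact prod_ne_zero_iff.2 fun b hb => sub_ne_zero.2 (ne_of_mem_erase hb).symm
  have hfz : ∀ j, z j ≠ z₀ → f.eval (z j) = 0 := fun j hj =>
    (hf _).trans (prod_eq_zero (mem_erase.2 ⟨hj, mem_image_of_mem z (mem_univ j)⟩) (sub_self _))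
  have hsum : f.eval z₀ * ∑ j with z j = z₀, w j = 0 := by
    rw [← sum_mul_eval_eq_zero w z h f, mul_sum, ← sum_filter_add_sum_filter_not univ (z · = z₀),
      sum_eq_zero (s := filter (¬z · = z₀) _) fun j hj => by rw [hfz j (mem_filter.1 hj).2, mul_zero],
      add_zero]
    exact sum_congr rfl fun j hj => by rw [(mem_filter.1 hj).2, mul_comm]
  exact (mul_eq_zero.1 hsum).resolve_left hf₀

end

theorem prod_pow_ite_mem {ι M : Type*} [Fintype ι] [DecidableEq ι] [CommMonoid M]
    (b : ι → M) (t : Finset ι) : ∏ i, b i ^ (if i ∈ t then 1 else 0) = ∏ i ∈ t, b i := by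
  simp [pow_ite]

theorem add_eq_zero_of_ne_of_sign {s t : ℝ} (hs : s = 1 ∨ s = -1) (ht : t = 1 ∨ t = -1)
    (h : s ≠ t) : s + t = 0 := by
  rcases hs with rfl | rfl <;> rcases ht with rfl | rfl <;> first | exact absurd rfl h | norm_num

theorem stmt6_general (c : ℕ) (J : Type*) [Fintype J]
    (P Q : Fin c → ℂ → ℂ)
    (β₀ : J → ℂ) (x : J → Fin c → ℝ) (hx : ∀ j i, x j i = 1 ∨ x j i = -1)
    (hinj : Function.Injective (fun j => (β₀ j, x j)))
    (β : Fin c → J → ℂ)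
    (hβ : ∀ i j, β i j = P i (β₀ j) + (x j i : ℂ) * Q i (β₀ j))
    (hQ : ∀ i j, Q i (β₀ j) ≠ 0)
    (α : J → ℂ)
    (hzero : ∀ n₀ : ℕ, ∀ n : Fin c → ℕ, (∀ i, n i ≤ 1) →
      ∑ j : J, α j * (β₀ j ^ n₀ * ∏ i : Fin c, β i j ^ n i) = 0) :
    ∀ j, α j = 0 := by
  classical
  intro j₀
  set a : Fin c → ℂ := fun i => P i (β₀ j₀) - x j₀ i * Q i (β₀ j₀)
  have hmoments (k : ℕ) : ∑ j, α j * (∏ i, (β i j - a i)) * β₀ j ^ k = 0 := by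
    have hsubsets (t : Finset (Fin c)) : ∑ j, α j * β₀ j ^ k * ∏ i ∈ t, β i j = 0 := by
      simpa only [prod_pow_ite_mem, mul_assoc] using
        hzero k (fun i => if i ∈ t then 1 else 0) fun i => by split_ifs <;> simp
    simpa only [mul_right_comm] using sum_mul_prod_sub_eq_zero _ β hsubsets a
  have hfiber := sum_fiber_eq_zero_of_sum_mul_pow_eq_zero _ β₀ hmoments (β₀ j₀)
  have hβ_sub (i : Fin c) {j : J} (hj : β₀ j = β₀ j₀) :
      β i j - a i = ((x j i + x j₀ i : ℝ) : ℂ) * Q i (β₀ j₀) := by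
    rw [hβ, hj]; push_cast; ring
  rw [sum_eq_single_of_mem j₀ (by simp) fun j hj hne => ?_] at hfiber
  · refine (mul_eq_zero.1 hfiber).resolve_right (prod_ne_zero_iff.2 fun i _ => ?_)
    rw [hβ_sub i rfl]
    refine mul_ne_zero (Complex.ofReal_ne_zero.2 ?_) (hQ i j₀)
    rcases hx j₀ i with h | h <;> norm_num [h]
  · have hβ₀ : β₀ j = β₀ j₀ := (mem_filter.1 hj).2
    obtain ⟨i, hi⟩ : ∃ i, x j i ≠ x j₀ i :=
      Function.ne_iff.1 fun hxx => hne (hinj (Prod.ext hβ₀ hxx))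
    rw [prod_eq_zero (mem_univ i) (by
      rw [hβ_sub i hβ₀, add_eq_zero_of_ne_of_sign (hx j i) (hx j₀ i) hi]; simp), mul_zero]

/-- Linear independence of the product-form solutions (Lemma 3.4): if
`β_{i,j} = P_i(β_{0,j}) + x^{(j)}_i Q_i(β_{0,j})` with `Q_i(β_{0,j}) ≠ 0`, the sign
vectors `x^{(j)} ∈ {-1,1}^c`, and `j ↦ (β_{0,j}, x^{(j)})` injective, then the functions
`p_j(n₀,n) = β_{0,j}^{n₀} Π_i β_{i,j}^{n_i}` on `ℕ × {0,1}^c` are linearly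
independent. -/
theorem stmt6 (c : ℕ) (hc : 1 ≤ c) (J : Type*) [Fintype J]
    (P Q : Fin c → ℂ → ℂ)
    (β₀ : J → ℂ) (x : J → Fin c → ℝ) (hx : ∀ j i, x j i = 1 ∨ x j i = -1)
    (hinj : Function.Injective (fun j => (β₀ j, x j)))
    (β : Fin c → J → ℂ)
    (hβ : ∀ i j, β i j = P i (β₀ j) + (x j i : ℂ) * Q i (β₀ j))
    (hQ : ∀ i j, Q i (β₀ j) ≠ 0)
    (α : J → ℂ)
    (hzero : ∀ n₀ : ℕ, ∀ n : Fin c → ℕ, (∀ i, n i ≤ 1) →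
      ∑ j : J, α j * (β₀ j ^ n₀ * ∏ i : Fin c, β i j ^ n i) = 0) :
    ∀ j, α j = 0 :=
  stmt6_general c J P Q β₀ x hx hinj β hβ hQ α hzero
end

section
/- Suppose the symmetric Assumption 2.1(i)–(ii) holds and let η ∈ [−1,1]. Set τ₁(η) = (A(1)+B(1))(1−η) + (C(1)+D(1))(1+η) and define φ(z) = B(z)(1−η) + C(z)(1+η) − z^K·τ₁(η) for |z| ≤ 1. Then φ has no zeros on the unit circle |z| = 1, and φ has exactly K zeros in the open unit disc counted with multiplicity: there exist ζ_1,…,ζ_K ∈ ℂ with |ζ_l| < 1 and a function u analytic and zero-free on the open unit disc such that φ(z) = u(z)·Π_{l=1}^{K}(z−ζ_l) for all |z| < 1. -/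
open scoped BigOperators

/-- `GC a z = Σ_{m=0}^∞ a_m z^m`, encoding `A(z) = Σ_{k=-∞}^K a_k z^{K-k}`
via the reindexing `m = K - k`. -/
noncomputable def GC (a : ℕ → ℝ) (z : ℂ) : ℂ := ∑' m : ℕ, (a m : ℂ) * z ^ m

/-- `T = A(1)+B(1)+C(1)+D(1)`. -/
noncomputable def Tval (a b cc d : ℕ → ℝ) : ℝ := Gone a + Gone b + Gone cc + Gone d

/-- `F(z) = z^K (A(1)+B(1)-C(1)-D(1)) - B(z) + C(z)`. -/
noncomputable def FC (K : ℕ) (a b cc d : ℕ → ℝ) (z : ℂ) : ℂ :=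
  z ^ K * ((Gone a + Gone b - Gone cc - Gone d : ℝ) : ℂ) - GC b z + GC cc z

/-- `τ₁(η) = (A(1)+B(1))(1-η) + (C(1)+D(1))(1+η)`. -/
noncomputable def tau1 (a b cc d : ℕ → ℝ) (η : ℝ) : ℝ :=
  (Gone a + Gone b) * (1 - η) + (Gone cc + Gone d) * (1 + η)

/-- `φ(z) = B(z)(1-η) + C(z)(1+η) - z^K τ₁(η)`. -/
noncomputable def phi (K : ℕ) (a b cc d : ℕ → ℝ) (η : ℝ) (z : ℂ) : ℂ :=
  GC b z * ((1 - η : ℝ) : ℂ) + GC cc z * ((1 + η : ℝ) : ℂ)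
    - z ^ K * (tau1 a b cc d η : ℝ)

/-!
With `eₘ = bₘ (1 - η) + cₘ (1 + η) ≥ 0` and `G z = Σ eₘ zᵐ` we have `φ = G - z ^ K τ₁` and
`‖G z‖ ≤ G 1 < τ₁` on the closed disc, the gap being `A(1) (1 - η) + D(1) (1 + η) > 0`. Hence
`‖G z‖ < ‖z ^ K τ₁‖` on an annulus `R ≤ ‖z‖ ≤ 1`, so `φ` has no zeros there, and its finitely many
zeros in `‖z‖ < R` can be divided out one at a time, leaving a zero-free quotient `u`. Their number
is found by integrating the logarithmic derivative of `φ` over `‖z‖ = R` in two ways: from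
`φ = u ∏ (z - ζₗ)` one gets `2πi n`, and from `φ = z ^ K (G / z ^ K - τ₁)` one gets `2πi K`, since
`G / z ^ K - τ₁` takes values in a disc avoiding `0`.
-/

open Metric Set Complex Filter Topology
open scoped Real

section LogDerivCircleIntegral

variable {c : ℂ} {R : ℝ}

theorem circleIntegrable_logDeriv (hR : 0 ≤ R) {f : ℂ → ℂ}
    (hf : ∀ z ∈ sphere c R, AnalyticAt ℂ f z) (hf₀ : ∀ z ∈ sphere c R, f z ≠ 0) :
    CircleIntegrable (logDeriv f) c R :=
  ContinuousOn.circleIntegrable hR fun z hz =>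
    ((hf z hz).deriv.continuousAt.div (hf z hz).continuousAt (hf₀ z hz)).continuousWithinAt

theorem circleIntegral_logDeriv_congr (hR : 0 ≤ R) {f g : ℂ → ℂ} {U : Set ℂ} (hU : IsOpen U)
    (hRU : sphere c R ⊆ U) (hfg : EqOn f g U) :
    (∮ z in C(c, R), logDeriv f z) = ∮ z in C(c, R), logDeriv g z :=
  circleIntegral.integral_congr hR fun _ hz =>
    (logDeriv_congr_nhds (hfg.eventuallyEq_of_mem (hU.mem_nhds (hRU hz)))).eq_of_nhds

theorem circleIntegral_logDeriv_mul (hR : 0 ≤ R) {f g : ℂ → ℂ}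
    (hf : ∀ z ∈ sphere c R, AnalyticAt ℂ f z) (hg : ∀ z ∈ sphere c R, AnalyticAt ℂ g z)
    (hf₀ : ∀ z ∈ sphere c R, f z ≠ 0) (hg₀ : ∀ z ∈ sphere c R, g z ≠ 0) :
    (∮ z in C(c, R), logDeriv (fun w => f w * g w) z)
      = (∮ z in C(c, R), logDeriv f z) + ∮ z in C(c, R), logDeriv g z := by
  rw [circleIntegral.integral_congr hR fun z hz => logDeriv_mul z (hf₀ z hz) (hg₀ z hz)
      (hf z hz).differentiableAt (hg z hz).differentiableAt,
    circleIntegral.integral_add (circleIntegrable_logDeriv hR hf hf₀)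
      (circleIntegrable_logDeriv hR hg hg₀)]

theorem circleIntegral_logDeriv_sub_const {ζ : ℂ} (hζ : ζ ∈ ball c R) :
    (∮ z in C(c, R), logDeriv (fun w => w - ζ) z) = 2 * π * I := by
  have hR : 0 ≤ R := dist_nonneg.trans (mem_ball.1 hζ).le
  rw [← circleIntegral.integral_sub_inv_of_mem_ball hζ]
  refine circleIntegral.integral_congr hR fun _ _ => ?_
  simp [logDeriv_apply]

theorem circleIntegral_logDeriv_mul_prod_sub (hR : 0 ≤ R) {n : ℕ} {ζ : Fin n → ℂ}
    (hζ : ∀ l, ζ l ∈ ball c R) {g : ℂ → ℂ} (hg : ∀ z ∈ sphere c R, AnalyticAt ℂ g z)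
    (hg₀ : ∀ z ∈ sphere c R, g z ≠ 0) :
    (∮ z in C(c, R), logDeriv (fun w => g w * ∏ l, (w - ζ l)) z)
      = (∮ z in C(c, R), logDeriv g z) + n * (2 * π * I) := by
  induction n generalizing g with
  | zero => simp
  | succ n ih =>
    have hζ₀ : ∀ z ∈ sphere c R, z - ζ 0 ≠ 0 := fun z hz h => by
      rw [sub_eq_zero.1 h, mem_sphere] at hz
      exact (mem_ball.1 (hζ 0)).ne hz
    have hpeel := ih (fun l => hζ l.succ) (g := fun w => g w * (w - ζ 0))
      (fun z hz => (hg z hz).mul (by fun_prop))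
      (fun z hz => mul_ne_zero (hg₀ z hz) (hζ₀ z hz))
    simp only [Fin.prod_univ_succ, ← mul_assoc]
    rw [hpeel, circleIntegral_logDeriv_mul hR hg (fun z _ => by fun_prop) hg₀ hζ₀,
      circleIntegral_logDeriv_sub_const (hζ 0)]
    push_cast
    ring

theorem circleIntegral_logDeriv_eq_zero_of_analyticOnNhd (hR : 0 ≤ R) {u : ℂ → ℂ}
    (hu : AnalyticOnNhd ℂ u (closedBall c R)) (hu₀ : ∀ z ∈ closedBall c R, u z ≠ 0) :
    (∮ z in C(c, R), logDeriv u z) = 0 := by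
  have h : AnalyticOnNhd ℂ (logDeriv u) (closedBall c R) := hu.deriv.div hu hu₀
  exact circleIntegral_eq_zero_of_differentiable_on_off_countable hR countable_empty
    h.continuousOn fun z hz => (h z (ball_subset_closedBall hz.1)).differentiableAt

/-- `log (v / a)` is a primitive of `logDeriv v` on the circle. -/
theorem circleIntegral_logDeriv_eq_zero_of_mem_ball (hR : 0 ≤ R) {v : ℂ → ℂ} {a : ℂ}
    (hv : ∀ z ∈ sphere c R, DifferentiableAt ℂ v z) (hva : ∀ z ∈ sphere c R, v z ∈ ball a ‖a‖) :
    (∮ z in C(c, R), logDeriv v z) = 0 := by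
  refine circleIntegral.integral_eq_zero_of_hasDerivWithinAt (f := fun z => log (v z / a)) hR
    fun z hz => ?_
  have ha : a ≠ 0 := by
    rintro rfl
    simpa using hva z hz
  have hslit : v z / a ∈ slitPlane := by
    refine ball_one_subset_slitPlane ?_
    rw [mem_ball, dist_eq_norm, ← div_self ha, ← sub_div, norm_div, div_lt_one (norm_pos_iff.2 ha)]
    simpa [dist_eq_norm] using hva z hz
  have hv₀ : v z ≠ 0 := by
    intro h
    simp [h] at hslit
  convert (((hv z hz).hasDerivAt.div_const a).clog hslit).hasDerivWithinAt using 1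
  rw [logDeriv_apply]
  field_simp

end LogDerivCircleIntegral

section Factorization

variable {U : Set ℂ} {f : ℂ → ℂ}

theorem AnalyticOnNhd.finite_setOf_eq_zero_of_isCompact (hf : AnalyticOnNhd ℂ f U)
    (hU : IsPreconnected U) {z₀ : ℂ} (hz₀ : z₀ ∈ U) (hfz₀ : f z₀ ≠ 0) {K : Set ℂ}
    (hK : IsCompact K) (hKU : K ⊆ U) : {z ∈ K | f z = 0}.Finite := by
  by_contra hinf
  obtain ⟨x, hxK, hacc⟩ := Set.Infinite.exists_accPt_of_subset_isCompact hinf hK (sep_subset K _)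
  have hfreq : ∃ᶠ z in 𝓝[≠] x, f z = 0 :=
    (accPt_iff_frequently_nhdsNE.1 hacc).mono fun _ hz => hz.2
  exact hfz₀ (hf.eqOn_zero_of_preconnected_of_frequently_eq_zero hU (hKU hxK) hfreq hz₀)

theorem AnalyticOnNhd.exists_eq_sub_mul (hf : AnalyticOnNhd ℂ f U) (hU : IsOpen U) {ζ : ℂ}
    (hζ : ζ ∈ U) (hfζ : f ζ = 0) :
    ∃ g : ℂ → ℂ, AnalyticOnNhd ℂ g U ∧ f = (· - ζ) * g := by
  refine ⟨dslope f ζ, ((differentiableOn_dslope (hU.mem_nhds hζ)).2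
    hf.differentiableOn).analyticOnNhd hU, funext fun z => ?_⟩
  simpa [hfζ] using (sub_smul_dslope f ζ z).symm

theorem AnalyticOnNhd.exists_eq_mul_prod_sub (hf : AnalyticOnNhd ℂ f U) (hU : IsOpen U)
    {S : Finset ℂ} (hSU : ↑S ⊆ U) (hfS : ∀ z ∈ S, analyticOrderAt f z ≠ ⊤)
    (hzeros : ∀ z ∈ U, f z = 0 → z ∈ S) {M : ℕ} (hM : ∑ z ∈ S, analyticOrderNatAt f z = M) :
    ∃ (ζ : Fin M → ℂ) (u : ℂ → ℂ), (∀ l, ζ l ∈ S) ∧ AnalyticOnNhd ℂ u U ∧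
      (∀ z ∈ U, u z ≠ 0) ∧ ∀ z ∈ U, f z = u z * ∏ l, (z - ζ l) := by
  induction M generalizing f with
  | zero =>
    refine ⟨finZeroElim, f, finZeroElim, hf, fun z hz hfz => ?_, by simp⟩
    have hzS := hzeros z hz hfz
    have : analyticOrderAt f z = 0 := by
      rw [← ENat.natCast_toNat (hfS z hzS)]
      exact_mod_cast (Finset.sum_eq_zero_iff.1 hM) z hzS
    exact (hf z (hSU hzS)).analyticOrderAt_eq_zero.1 this hfz
  | succ M ih =>
    obtain ⟨ζ₀, hζ₀S, hζ₀⟩ := Finset.exists_ne_zero_of_sum_ne_zero (hM.trans_ne M.succ_ne_zero)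
    obtain ⟨g, hg, rfl⟩ :=
      hf.exists_eq_sub_mul hU (hSU hζ₀S) (apply_eq_zero_of_analyticOrderNatAt_ne_zero hζ₀)
    have hgS : ∀ z ∈ S, analyticOrderAt g z ≠ ⊤ := fun z hz h =>
      hfS z hz (analyticOrderAt_mul_eq_top_of_right h)
    have hord : ∀ z ∈ S, analyticOrderNatAt ((· - ζ₀) * g) z
        = (if z = ζ₀ then 1 else 0) + analyticOrderNatAt g z := fun z hz => by
      rw [analyticOrderNatAt_mul (by fun_prop) (hg z (hSU hz))
        (by rcases eq_or_ne z ζ₀ with rfl | h <;> simp [*]) (hgS z hz)]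
      split_ifs with h
      · subst h; simp [analyticOrderNatAt]
      · simp [analyticOrderNatAt, h]
    rw [Finset.sum_congr rfl hord, Finset.sum_add_distrib, Finset.sum_ite_eq' S ζ₀,
      if_pos hζ₀S, add_comm] at hM
    obtain ⟨ζ, u, hζS, hu, hu₀, hgu⟩ :=
      ih hg hgS (fun z hz hgz => hzeros z hz (by simp [hgz])) (Nat.succ_injective hM)
    refine ⟨Fin.cons ζ₀ ζ, u, Fin.cases hζ₀S hζS, hu, hu₀, fun z hz => ?_⟩
    rw [Fin.prod_univ_succ, Pi.mul_apply, hgu z hz]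
    simp only [Fin.cons_zero, Fin.cons_succ]
    ring

theorem AnalyticOnNhd.exists_eq_mul_prod_sub_of_isCompact
    (hf : AnalyticOnNhd ℂ f U) (hU : IsOpen U) (hUc : IsPreconnected U) {z₀ : ℂ} (hz₀ : z₀ ∈ U)
    (hfz₀ : f z₀ ≠ 0) {K : Set ℂ} (hK : IsCompact K) (hKU : K ⊆ U)
    (hzeros : ∀ z ∈ U, f z = 0 → z ∈ K) :
    ∃ (n : ℕ) (ζ : Fin n → ℂ) (u : ℂ → ℂ), (∀ l, ζ l ∈ K ∧ f (ζ l) = 0) ∧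
      AnalyticOnNhd ℂ u U ∧ (∀ z ∈ U, u z ≠ 0) ∧ ∀ z ∈ U, f z = u z * ∏ l, (z - ζ l) := by
  set S := (hf.finite_setOf_eq_zero_of_isCompact hUc hz₀ hfz₀ hK hKU).toFinset
  have hS : ∀ {z}, z ∈ S ↔ z ∈ K ∧ f z = 0 := by simp [S]
  obtain ⟨ζ, u, hζ, hu⟩ := hf.exists_eq_mul_prod_sub hU (fun z hz => hKU (hS.1 hz).1)
    (fun z hz => analyticOrderAt_ne_top_of_isPreconnected hf hUc hz₀ (hKU (hS.1 hz).1)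
      ((hf z₀ hz₀).analyticOrderAt_eq_zero.2 hfz₀ ▸ ENat.zero_ne_top))
    (fun z hz hfz => hS.2 ⟨hzeros z hz hfz, hfz⟩) rfl
  exact ⟨_, ζ, u, fun l => hS.1 (hζ l), hu⟩

end Factorization

section PerturbedMonomial

variable {G : ℂ → ℂ} {K : ℕ} {τ : ℂ}

theorem exists_radius_lt_one_lt_norm_mul_pow {s : ℝ} (hsτ : s < ‖τ‖) (K : ℕ) :
    ∃ R ∈ Ioo (0 : ℝ) 1, s < ‖τ‖ * R ^ K := by
  have hcont : ContinuousAt (fun R : ℝ => ‖τ‖ * R ^ K) 1 := by fun_prop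
  have hnear : ∀ᶠ R in 𝓝[<] (1 : ℝ), s < ‖τ‖ * R ^ K :=
    nhdsWithin_le_nhds (hcont.eventually (lt_mem_nhds (by simpa using hsτ)))
  obtain ⟨R, hR, hR'⟩ := (hnear.and (Ioo_mem_nhdsLT zero_lt_one)).exists
  exact ⟨R, hR', hR⟩

theorem circleIntegral_logDeriv_sub_pow_mul {R : ℝ} (hR : 0 < R)
    (hG : ∀ z ∈ sphere (0 : ℂ) R, AnalyticAt ℂ G z)
    (hlt : ∀ z ∈ sphere (0 : ℂ) R, ‖G z‖ < ‖z ^ K * τ‖) :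
    (∮ z in C(0, R), logDeriv (fun z => G z - z ^ K * τ) z) = K * (2 * π * I) := by
  set w : ℂ → ℂ := fun z => G z / z ^ K - τ
  have hsphere : ∀ z ∈ sphere (0 : ℂ) R, z ≠ 0 := fun z hz h => by
    simp [h, hR.ne] at hz
  have hw : ∀ z ∈ sphere (0 : ℂ) R, AnalyticAt ℂ w z := fun z hz =>
    ((hG z hz).div (analyticAt_id.pow K) (pow_ne_zero K (hsphere z hz))).sub analyticAt_const
  have hwτ : ∀ z ∈ sphere (0 : ℂ) R, w z ∈ ball (-τ) ‖-τ‖ := fun z hz => by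
    have := hlt z hz
    rw [norm_mul] at this
    rw [mem_ball, dist_eq_norm, sub_neg_eq_add, sub_add_cancel, norm_neg, norm_div,
      div_lt_iff₀ (norm_pos_iff.2 (pow_ne_zero K (hsphere z hz)))]
    linarith
  have hw₀ : ∀ z ∈ sphere (0 : ℂ) R, w z ≠ 0 := fun z hz h => by
    simpa [h] using hwτ z hz
  have hfactor : EqOn (fun z => G z - z ^ K * τ) (fun z => w z * ∏ _l : Fin K, (z - 0)) {0}ᶜ :=
    fun z hz => by
      simp only [w, sub_zero, Finset.prod_const, Finset.card_univ, Fintype.card_fin]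
      field_simp [pow_ne_zero K (show z ≠ 0 from hz)]
  rw [circleIntegral_logDeriv_congr hR.le isOpen_compl_singleton hsphere hfactor,
    circleIntegral_logDeriv_mul_prod_sub hR.le (fun _ => mem_ball_self hR) hw hw₀,
    circleIntegral_logDeriv_eq_zero_of_mem_ball hR.le (fun z hz => (hw z hz).differentiableAt)
      hwτ, zero_add]

theorem exists_eq_mul_prod_sub_of_norm_le {s : ℝ} (hG : AnalyticOnNhd ℂ G (ball 0 1))
    (hGs : ∀ z : ℂ, ‖z‖ ≤ 1 → ‖G z‖ ≤ s) (hsτ : s < ‖τ‖) :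
    (∀ z : ℂ, ‖z‖ = 1 → G z - z ^ K * τ ≠ 0) ∧
      ∃ ζ : Fin K → ℂ, (∀ l, ‖ζ l‖ < 1) ∧ ∃ u : ℂ → ℂ, AnalyticOnNhd ℂ u (ball 0 1) ∧
        (∀ z ∈ ball (0 : ℂ) 1, u z ≠ 0) ∧
        ∀ z ∈ ball (0 : ℂ) 1, G z - z ^ K * τ = u z * ∏ l, (z - ζ l) := by
  obtain ⟨R, ⟨hR₀, hR₁⟩, hsR⟩ := exists_radius_lt_one_lt_norm_mul_pow hsτ K
  have hlt : ∀ z : ℂ, R ≤ ‖z‖ → ‖z‖ ≤ 1 → ‖G z‖ < ‖z ^ K * τ‖ := fun z hRz hz1 =>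
    calc ‖G z‖ ≤ s := hGs z hz1
      _ < ‖τ‖ * R ^ K := hsR
      _ ≤ ‖τ‖ * ‖z‖ ^ K := by gcongr
      _ = ‖z ^ K * τ‖ := by rw [norm_mul, norm_pow, mul_comm]
  have hf₀ : ∀ z : ℂ, R ≤ ‖z‖ → ‖z‖ ≤ 1 → G z - z ^ K * τ ≠ 0 := fun z hRz hz1 h =>
    (hlt z hRz hz1).ne (by rw [sub_eq_zero.1 h])
  have hzeros : ∀ z : ℂ, ‖z‖ ≤ 1 → G z - z ^ K * τ = 0 → ‖z‖ < R := fun z hz1 h =>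
    lt_of_not_ge fun hRz => hf₀ z hRz hz1 h
  have hR : (R : ℂ) ∈ ball (0 : ℂ) 1 := by simpa [abs_of_pos hR₀] using hR₁
  have hf : AnalyticOnNhd ℂ (fun z => G z - z ^ K * τ) (ball 0 1) :=
    hG.sub ((analyticOnNhd_id.pow K).mul analyticOnNhd_const)
  obtain ⟨n, ζ, u, hζ, hu, hu₀, hfu⟩ :=
    hf.exists_eq_mul_prod_sub_of_isCompact isOpen_ball
      (convex_ball _ _).isPreconnected hR
      (hf₀ R (by simp [abs_of_pos hR₀]) (by simp [abs_of_pos hR₀, hR₁.le]))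
      (isCompact_closedBall 0 R) (closedBall_subset_ball hR₁)
      (fun z hz hfz => mem_closedBall_zero_iff.2 (hzeros z (mem_ball_zero_iff.1 hz).le hfz).le)
  have hζR : ∀ l, ζ l ∈ ball (0 : ℂ) R := fun l =>
    mem_ball_zero_iff.2 (hzeros _ ((mem_closedBall_zero_iff.1 (hζ l).1).trans hR₁.le) (hζ l).2)
  have hsphere : sphere (0 : ℂ) R ⊆ ball 0 1 := sphere_subset_ball hR₁
  have hdisc : closedBall (0 : ℂ) R ⊆ ball 0 1 := closedBall_subset_ball hR₁
  have hcount : (n : ℂ) * (2 * π * I) = K * (2 * π * I) := by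
    rw [← circleIntegral_logDeriv_sub_pow_mul hR₀ (fun z hz => hG z (hsphere hz))
        (fun z hz => hlt z (mem_sphere_zero_iff_norm.1 hz).ge
          ((mem_sphere_zero_iff_norm.1 hz).trans_le hR₁.le)),
      circleIntegral_logDeriv_congr hR₀.le isOpen_ball hsphere hfu,
      circleIntegral_logDeriv_mul_prod_sub hR₀.le hζR (fun z hz => hu z (hsphere hz))
        (fun z hz => hu₀ z (hsphere hz)),
      circleIntegral_logDeriv_eq_zero_of_analyticOnNhd hR₀.le (hu.mono hdisc)
        (fun z hz => hu₀ z (hdisc hz)), zero_add]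
  obtain rfl : n = K := by exact_mod_cast mul_right_cancel₀ two_pi_I_ne_zero hcount
  exact ⟨fun z hz => hf₀ z (hz ▸ hR₁.le) hz.le, ζ,
    fun l => (mem_ball_zero_iff.1 (hζR l)).trans hR₁, u, hu, hu₀, hfu⟩

end PerturbedMonomial

section NonnegCoefficients

variable {e : ℕ → ℝ}

theorem norm_ofReal_mul_pow_le (x : ℝ) {z : ℂ} (hz : ‖z‖ ≤ 1) (m : ℕ) :
    ‖(x : ℂ) * z ^ m‖ ≤ |x| := by
  rw [norm_mul, norm_pow, norm_real, Real.norm_eq_abs]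
  exact mul_le_of_le_one_right (abs_nonneg x) (pow_le_one₀ (norm_nonneg z) hz)

theorem summable_ofReal_mul_pow (he : Summable e) {z : ℂ} (hz : ‖z‖ ≤ 1) :
    Summable fun m => (e m : ℂ) * z ^ m :=
  Summable.of_norm_bounded he.abs fun m => norm_ofReal_mul_pow_le (e m) hz m

theorem norm_GC_le (he : Summable e) (he₀ : ∀ m, 0 ≤ e m) {z : ℂ} (hz : ‖z‖ ≤ 1) :
    ‖GC e z‖ ≤ Gone e :=
  tsum_of_norm_bounded he.hasSum fun m =>
    (norm_ofReal_mul_pow_le (e m) hz m).trans_eq (abs_of_nonneg (he₀ m))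

theorem analyticOnNhd_GC (he : Summable e) : AnalyticOnNhd ℂ (GC e) (ball 0 1) := by
  have hlim : TendstoUniformlyOn (fun (t : Finset ℕ) z => ∑ m ∈ t, (e m : ℂ) * z ^ m) (GC e)
      atTop (ball 0 1) :=
    tendstoUniformlyOn_tsum he.abs fun m z hz =>
      norm_ofReal_mul_pow_le (e m) (mem_ball_zero_iff.1 hz).le m
  refine (hlim.tendstoLocallyUniformlyOn.differentiableOn (Eventually.of_forall fun t => ?_)
    isOpen_ball).analyticOnNhd isOpen_ball
  exact (Differentiable.fun_sum fun m _ => (differentiable_const _).mul (differentiable_pow m))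
    |>.differentiableOn

theorem GC_mul_add_mul {b c : ℕ → ℝ} (hb : Summable b) (hc : Summable c) {z : ℂ} (hz : ‖z‖ ≤ 1)
    (x y : ℝ) : GC b z * x + GC c z * y = GC (fun m => b m * x + c m * y) z := by
  rw [GC, GC, ← tsum_mul_right, ← tsum_mul_right,
    ← ((summable_ofReal_mul_pow hb hz).mul_right _).tsum_add
      ((summable_ofReal_mul_pow hc hz).mul_right _), GC]
  congr 1 with m
  push_cast
  ring

theorem Gone_mul_add_mul {b c : ℕ → ℝ} (hb : Summable b) (hc : Summable c) (x y : ℝ) :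
    Gone (fun m => b m * x + c m * y) = Gone b * x + Gone c * y := by
  rw [Gone, (hb.mul_right x).tsum_add (hc.mul_right y), tsum_mul_right, tsum_mul_right, Gone, Gone]

end NonnegCoefficients

theorem stmt8_general (K : ℕ) (a b cc d : ℕ → ℝ)
    (nnb : ∀ m, 0 ≤ b m)
    (nnc : ∀ m, 0 ≤ cc m)
    (sumb : Summable b) (sumc : Summable cc)
    (posA : 0 < Gone a) (posD : 0 < Gone d)
    (η : ℝ) (hη : η ∈ Set.Icc (-1 : ℝ) 1) :
    (∀ z : ℂ, ‖z‖ = 1 → phi K a b cc d η z ≠ 0)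
    ∧ ∃ ζ : Fin K → ℂ, (∀ l, ‖ζ l‖ < 1)
        ∧ ∃ u : ℂ → ℂ, AnalyticOnNhd ℂ u (Metric.ball (0 : ℂ) 1)
          ∧ (∀ z ∈ Metric.ball (0 : ℂ) 1, u z ≠ 0)
          ∧ ∀ z ∈ Metric.ball (0 : ℂ) 1,
              phi K a b cc d η z = u z * ∏ l : Fin K, (z - ζ l) := by
  obtain ⟨hη₁, hη₂⟩ := hη
  set e : ℕ → ℝ := fun m => b m * (1 - η) + cc m * (1 + η)
  have he : Summable e := (sumb.mul_right _).add (sumc.mul_right _)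
  have he₀ : ∀ m, 0 ≤ e m := fun m =>
    add_nonneg (mul_nonneg (nnb m) (by linarith)) (mul_nonneg (nnc m) (by linarith))
  have hphi : ∀ z : ℂ, ‖z‖ ≤ 1 → phi K a b cc d η z = GC e z - z ^ K * (tau1 a b cc d η : ℂ) :=
    fun z hz => by rw [phi, GC_mul_add_mul sumb sumc hz]
  have hτ : Gone e < ‖(tau1 a b cc d η : ℂ)‖ := by
    rw [norm_real, Real.norm_eq_abs, Gone_mul_add_mul sumb sumc, tau1]
    have hgap : 0 < Gone a * (1 - η) + Gone d * (1 + η) := by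
      nlinarith [min_le_left (Gone a) (Gone d), min_le_right (Gone a) (Gone d), lt_min posA posD]
    exact lt_of_lt_of_le (by linarith) (le_abs_self _)
  obtain ⟨hcircle, ζ, hζ, u, hu, hu₀, hfactor⟩ :=
    exists_eq_mul_prod_sub_of_norm_le (K := K) (analyticOnNhd_GC he)
      (fun z hz => norm_GC_le he he₀ hz) hτ
  exact ⟨fun z hz => hphi z hz.le ▸ hcircle z hz, ζ, hζ, u, hu, hu₀,
    fun z hz => (hphi z (mem_ball_zero_iff.1 hz).le).trans (hfactor z hz)⟩

/-- Under the symmetric Assumption 2.1(i)–(ii), for `η ∈ [-1,1]` the function `φ` has no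
zeros on the unit circle and exactly `K` zeros in the open unit disc, counted with
multiplicity. -/
theorem stmt8 (c K : ℕ) (hc : 1 ≤ c) (hK : 1 ≤ K) (a b cc d : ℕ → ℝ)
    (nna : ∀ m, 0 ≤ a m) (nnb : ∀ m, 0 ≤ b m)
    (nnc : ∀ m, 0 ≤ cc m) (nnd : ∀ m, 0 ≤ d m)
    (suma : Summable a) (sumb : Summable b) (sumc : Summable cc) (sumd : Summable d)
    (posA : 0 < Gone a) (posD : 0 < Gone d)
    (η : ℝ) (hη : η ∈ Set.Icc (-1 : ℝ) 1) :
    (∀ z : ℂ, ‖z‖ = 1 → phi K a b cc d η z ≠ 0)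
    ∧ ∃ ζ : Fin K → ℂ, (∀ l, ‖ζ l‖ < 1)
        ∧ ∃ u : ℂ → ℂ, AnalyticOnNhd ℂ u (Metric.ball (0 : ℂ) 1)
          ∧ (∀ z ∈ Metric.ball (0 : ℂ) 1, u z ≠ 0)
          ∧ ∀ z ∈ Metric.ball (0 : ℂ) 1,
              phi K a b cc d η z = u z * ∏ l : Fin K, (z - ζ l) :=
  stmt8_general K a b cc d nnb nnc sumb sumc posA posD η hη
end

section
/- Let c ≥ 0 and K ≥ 1 be integers. Let Λ₀ be a real (c+1)×(c+1) matrix, let Λ_{−k}, for integers k ≥ 1, be real (c+1)×(c+1) matrices with nonnegative entries such that Σ_{k=1}^∞ ‖Λ_{−k}‖ < ∞, and let λ₁,…,λ_K ≥ 0 with Λ_i = λ_i·I for i = 1,…,K (Assumption 6.1). Let J ≥ 1, and for j = 1,…,J let γ_j ∈ ℂ, β_j ∈ ℂ with 0 < |β_j| < 1, and row vectors ω_j ∈ ℂ^{c+1} satisfying the characteristic relation ω_j·(Σ_{n=0}^{K} β_j^{n} Λ_{K−n} + β_j^{K} Σ_{n=1}^{∞} β_j^{n} Λ_{−n}) = 0.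 Let F_{n}: [0,∞) → ℝ^{c+1}, for n ∈ ℕ, be differentiable column-vector-valued functions with 0 ≤ F_n(t) ≤ 1 componentwise, F_n(0) = 𝟙 (the all-ones vector), satisfying the backward Kolmogorov equations F_n′(t) = Σ_{i=0}^{K} Λ_i F_n(t) + Σ_{k=1}^{n} Λ_{−k} F_{n−k}(t) for all n ∈ ℕ and t ≥ 0. Then for all t ≥ 0: Σ_{j=1}^{J} γ_j · ω_j · (Σ_{n=0}^{∞} β_j^{n} F_n(t)) = Σ_{j=1}^{J} (γ_j · ω_j 𝟙 / (1−β_j)) · exp( t · Σ_{i=1}^{K} (1 − β_j^{−i}) λ_i ). -/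
/-! For fixed `j` let `G(t) = ∑ₙ βⁿ ω·Fₙ(t)`. Differentiating termwise, the convolution term
`∑_{k=1}^n Λ_{-k} F_{n-k}` of the backward equations becomes a Cauchy product, so
`G' = ω (Λ₀ + L + ∑ₖ βᵏ Λ_{-k}) ∑ₙ βⁿ Fₙ` with `L = ∑ᵢ λᵢ`. Divided by `β^K`, the characteristic
relation says that `ω` is a left eigenvector of `Λ₀ + ∑ₖ βᵏ Λ_{-k}` for the eigenvalue
`-∑ᵢ β⁻ⁱ λᵢ`; hence `G' = μ G` with `μ = ∑ᵢ (1 - β⁻ⁱ) λᵢ`, while `G(0) = ω𝟙 / (1 - β)` since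
`Fₙ(0) = 𝟙`. The bound `0 ≤ Fₙ ≤ 1` makes all series converge uniformly. -/

open Finset Matrix

theorem sum_range_succ_eq_add_sum_Icc {M : Type*} [AddCommMonoid M] (f : ℕ → M) (n : ℕ) :
    ∑ k ∈ range (n + 1), f k = f 0 + ∑ k ∈ Icc 1 n, f k := by
  rw [range_eq_Ico, sum_eq_sum_Ico_succ_bot n.succ_pos]
  rfl

theorem hasSum_sum_Icc_mul {R : Type*} [NormedRing R] [CompleteSpace R] {a x : ℕ → R}
    (ha : Summable (‖a ·‖)) (hx : Summable (‖x ·‖)) :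
    HasSum (fun n => ∑ k ∈ Icc 1 n, a k * x (n - k)) ((∑' k, a (k + 1)) * ∑' l, x l) := by
  have hcauchy : HasSum (fun n => ∑ k ∈ range (n + 1), a k * x (n - k))
      ((∑' k, a k) * ∑' l, x l) := by
    rw [tsum_mul_tsum_eq_tsum_sum_range_of_summable_norm ha hx]
    exact (summable_norm_sum_mul_range_of_summable_norm ha hx).of_norm.hasSum
  have := hcauchy.sub (hx.of_norm.hasSum.mul_left (a 0))
  simpa [sum_range_succ_eq_add_sum_Icc, ha.of_norm.tsum_eq_zero_add, add_mul] using this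

theorem sum_range_pow_mul_eq_pow_mul_sum_Icc {K : Type*} [Field K] {b : K} (hb : b ≠ 0)
    (a : ℕ → K) (N : ℕ) :
    ∑ n ∈ range N, b ^ n * a (N - n) = b ^ N * ∑ i ∈ Icc 1 N, b⁻¹ ^ i * a i := by
  rw [← sum_range_reflect, ← Ico_add_one_right_eq_Icc, sum_Ico_eq_sum_range, Nat.add_sub_cancel,
    mul_sum]
  refine sum_congr rfl fun n hn => ?_
  have hn : n < N := mem_range.mp hn
  rw [show N - (N - 1 - n) = 1 + n by omega, show N - 1 - n = N - (1 + n) by omega,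
    pow_sub₀ b hb (by omega), inv_pow, mul_assoc]

theorem eq_mul_cexp_of_hasDerivAt {g : ℝ → ℂ} {μ : ℂ} (hg : ContinuousOn g (Set.Ici 0))
    (hg' : ∀ s, 0 < s → HasDerivAt g (μ * g s) s) {t : ℝ} (ht : 0 ≤ t) :
    g t = g 0 * Complex.exp (μ * t) := by
  set φ : ℝ → ℂ := fun s => Complex.exp (-(μ * s)) * g s
  have hφ' : ∀ s, 0 < s → HasDerivAt φ 0 s := by
    intro s hs
    have hlin : HasDerivAt (fun y : ℝ => -(μ * y)) (-μ) s := by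
      simpa using ((hasDerivAt_id (s : ℂ)).comp_ofReal.const_mul μ).fun_neg
    exact (hlin.cexp.fun_mul (hg' s hs)).congr_deriv (by ring)
  have hconst : Set.EqOn φ (fun _ => φ 1) (Set.Ici 0) :=
    Set.EqOn.of_subset_closure (s := Set.Ioi 0)
      (fun s hs => isOpen_Ioi.is_const_of_deriv_eq_zero isPreconnected_Ioi
        (fun y hy => (hφ' y hy).differentiableAt.differentiableWithinAt)
        (fun y hy => (hφ' y hy).deriv) hs (Set.mem_Ioi.mpr one_pos))
      ((Complex.continuous_exp.comp
        (continuous_const.mul Complex.continuous_ofReal).neg).continuousOn.mul hg)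
      continuousOn_const Set.Ioi_subset_Ici_self (closure_Ioi _).symm.subset
  have h := (hconst ht).trans (hconst Set.self_mem_Ici).symm
  simp only [φ, Complex.ofReal_zero, mul_zero, neg_zero, Complex.exp_zero, one_mul] at h
  rw [← h, mul_comm, ← mul_assoc, ← Complex.exp_add]
  simp

section GeneratingFunction

variable {ι : Type*}

theorem summable_norm_pow_mul {b : ℂ} (hb : ‖b‖ < 1) {u : ℕ → ι → ℝ} (hu : ∀ n m, |u n m| ≤ 1)
    (q : ι) : Summable fun n => ‖b ^ n * (u n q : ℂ)‖ := by
  refine (summable_geometric_of_lt_one (norm_nonneg b) hb).of_nonneg_of_le (fun _ => norm_nonneg _)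
    fun n => ?_
  rw [norm_mul, norm_pow, Complex.norm_real, Real.norm_eq_abs]
  exact mul_le_of_le_one_right (by positivity) (hu n q)

variable [Fintype ι]

def kolmogorovDrift (Λ₀ : Matrix ι ι ℝ) (Λm : ℕ → Matrix ι ι ℝ) (L : ℝ) (u : ℕ → ι → ℝ)
    (n : ℕ) (m : ι) : ℝ :=
  (Λ₀ *ᵥ u n) m + L * u n m + ∑ k ∈ Icc 1 n, (Λm k *ᵥ u (n - k)) m

variable {Λ₀ : Matrix ι ι ℝ} {Λm : ℕ → Matrix ι ι ℝ} {L : ℝ}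

theorem pow_mul_sum_kolmogorovDrift (u : ℕ → ι → ℝ) (b : ℂ) (w : ι → ℂ) (n : ℕ) :
    b ^ n * ∑ m, w m * (kolmogorovDrift Λ₀ Λm L u n m : ℂ) =
      ∑ q, (∑ p, w p * (Λ₀ p q : ℂ)) * (b ^ n * u n q)
      + L * (b ^ n * ∑ m, w m * (u n m : ℂ))
      + ∑ q, ∑ k ∈ Icc 1 n, (b ^ k * ∑ p, w p * (Λm k p q : ℂ)) * (b ^ (n - k) * u (n - k) q) := by
  have hshift : ∀ q,
      ∑ k ∈ Icc 1 n, (b ^ k * ∑ p, w p * (Λm k p q : ℂ)) * (b ^ (n - k) * u (n - k) q)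
        = b ^ n * ∑ k ∈ Icc 1 n, (∑ p, w p * (Λm k p q : ℂ)) * u (n - k) q := by
    intro q
    rw [mul_sum]
    refine sum_congr rfl fun k hk => ?_
    rw [← pow_mul_pow_sub b (mem_Icc.mp hk).2]
    ring
  rw [sum_congr rfl fun q _ => hshift q]
  simp only [kolmogorovDrift, mulVec, dotProduct, Complex.ofReal_add, Complex.ofReal_mul,
    Complex.ofReal_sum, mul_add, sum_add_distrib, mul_sum, sum_mul]
  congr 1
  congr 1
  · rw [sum_comm]
    exact sum_congr rfl fun _ _ => sum_congr rfl fun _ _ => by ring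
  · exact sum_congr rfl fun _ _ => by ring
  · rw [sum_comm, sum_congr rfl fun _ _ => sum_comm, sum_comm]
    exact sum_congr rfl fun _ _ => sum_congr rfl fun _ _ => sum_congr rfl fun _ _ => by ring

theorem abs_mulVec_le_of_abs_le_one {M : Matrix ι ι ℝ} {v : ι → ℝ} (hv : ∀ q, |v q| ≤ 1) (m : ι) :
    |(M *ᵥ v) m| ≤ ∑ q, |M m q| :=
  (abs_sum_le_sum_abs _ _).trans <| sum_le_sum fun q _ => by
    rw [abs_mul]
    exact mul_le_of_le_one_right (abs_nonneg _) (hv q)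

theorem abs_kolmogorovDrift_le (hΛ : ∀ p q, Summable fun k => Λm k p q)
    {u : ℕ → ι → ℝ} (hu : ∀ n m, |u n m| ≤ 1) (n : ℕ) (m : ι) :
    |kolmogorovDrift Λ₀ Λm L u n m| ≤ ∑ q, |Λ₀ m q| + |L| + ∑ q, ∑' k, |Λm k m q| := by
  have hjumps : |∑ k ∈ Icc 1 n, (Λm k *ᵥ u (n - k)) m| ≤ ∑ q, ∑' k, |Λm k m q| := calc
    _ ≤ ∑ k ∈ Icc 1 n, ∑ q, |Λm k m q| :=
      (abs_sum_le_sum_abs _ _).trans (sum_le_sum fun k _ => abs_mulVec_le_of_abs_le_one (hu _) m)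
    _ = ∑ q, ∑ k ∈ Icc 1 n, |Λm k m q| := sum_comm
    _ ≤ ∑ q, ∑' k, |Λm k m q| :=
      sum_le_sum fun q _ => (hΛ m q).abs.sum_le_tsum _ fun k _ => abs_nonneg _
  have hdiag : |L * u n m| ≤ |L| := by
    rw [abs_mul]
    exact mul_le_of_le_one_right (abs_nonneg _) (hu n m)
  calc |kolmogorovDrift Λ₀ Λm L u n m|
      ≤ |(Λ₀ *ᵥ u n) m| + |L * u n m| + |∑ k ∈ Icc 1 n, (Λm k *ᵥ u (n - k)) m| :=
        (abs_add_le _ _).trans (add_le_add_left (abs_add_le _ _) _)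
    _ ≤ _ := add_le_add (add_le_add (abs_mulVec_le_of_abs_le_one (hu n) m) hdiag) hjumps

theorem norm_pow_mul_sum_le (b : ℂ) (w : ι → ℂ) {v B : ι → ℝ} (hv : ∀ m, |v m| ≤ B m) (n : ℕ) :
    ‖b ^ n * ∑ m, w m * (v m : ℂ)‖ ≤ ‖b‖ ^ n * ∑ m, ‖w m‖ * B m := by
  rw [norm_mul, norm_pow]
  gcongr
  refine (norm_sum_le _ _).trans (sum_le_sum fun m _ => ?_)
  rw [norm_mul, Complex.norm_real, Real.norm_eq_abs]
  gcongr
  exact hv m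

theorem hasSum_pow_mul_sum {b : ℂ} (hb : ‖b‖ < 1) (w : ι → ℂ) {u : ℕ → ι → ℝ}
    (hu : ∀ n m, |u n m| ≤ 1) :
    HasSum (fun n => b ^ n * ∑ m, w m * (u n m : ℂ)) (∑ q, w q * ∑' n, b ^ n * (u n q : ℂ)) := by
  refine (hasSum_sum fun q _ => ((summable_norm_pow_mul hb hu q).of_norm.hasSum.mul_left (w q)))
    |>.congr_fun fun n => ?_
  rw [mul_sum]
  exact sum_congr rfl fun _ _ => by ring

theorem hasSum_pow_mul_sum_kolmogorovDrift {b σ : ℂ} (hb : ‖b‖ < 1) {w : ι → ℂ}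
    (hΛ : ∀ p q, Summable fun k => Λm k p q) {u : ℕ → ι → ℝ} (hu : ∀ n m, |u n m| ≤ 1)
    (heig : ∀ q, ∑ p, w p * (Λ₀ p q : ℂ) + ∑' k, b ^ (k + 1) * ∑ p, w p * (Λm (k + 1) p q : ℂ)
      = σ * w q) :
    HasSum (fun n => b ^ n * ∑ m, w m * (kolmogorovDrift Λ₀ Λm L u n m : ℂ))
      ((L + σ) * ∑' n, b ^ n * ∑ m, w m * (u n m : ℂ)) := by
  set X : ι → ℂ := fun q => ∑' n, b ^ n * (u n q : ℂ)
  have hx := summable_norm_pow_mul hb hu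
  have hr : ∀ q, Summable fun k => ‖b ^ k * ∑ p, w p * (Λm k p q : ℂ)‖ := by
    intro q
    refine .of_nonneg_of_le (f := fun k => ∑ p, ‖w p‖ * |Λm k p q|) (fun _ => norm_nonneg _)
      (fun k => ?_) (summable_sum fun p _ => (hΛ p q).abs.mul_left ‖w p‖)
    exact (norm_pow_mul_sum_le b w (v := fun p => Λm k p q) (fun p => le_rfl) k).trans
      (mul_le_of_le_one_left (by positivity) (pow_le_one₀ (norm_nonneg b) hb.le))
  have hdiag : HasSum (fun n => ∑ q, (∑ p, w p * (Λ₀ p q : ℂ)) * (b ^ n * u n q))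
      (∑ q, (∑ p, w p * (Λ₀ p q : ℂ)) * X q) :=
    hasSum_sum fun q _ => (hx q).of_norm.hasSum.mul_left _
  have hjumps : HasSum
      (fun n => ∑ q, ∑ k ∈ Icc 1 n,
        (b ^ k * ∑ p, w p * (Λm k p q : ℂ)) * (b ^ (n - k) * u (n - k) q))
      (∑ q, (∑' k, b ^ (k + 1) * ∑ p, w p * (Λm (k + 1) p q : ℂ)) * X q) :=
    hasSum_sum fun q _ => hasSum_sum_Icc_mul (a := fun k => b ^ k * ∑ p, w p * (Λm k p q : ℂ))
      (x := fun l => b ^ l * (u l q : ℂ)) (hr q) (hx q)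
  have hG := hasSum_pow_mul_sum hb w hu
  have hval : (L + σ) * ∑ q, w q * X q = ∑ q, (∑ p, w p * (Λ₀ p q : ℂ)) * X q + L * ∑ q, w q * X q
      + ∑ q, (∑' k, b ^ (k + 1) * ∑ p, w p * (Λm (k + 1) p q : ℂ)) * X q := by
    have hrow : ∑ q, (∑ p, w p * (Λ₀ p q : ℂ)) * X q
        + ∑ q, (∑' k, b ^ (k + 1) * ∑ p, w p * (Λm (k + 1) p q : ℂ)) * X q
        = σ * ∑ q, w q * X q := by
      rw [← sum_add_distrib, mul_sum]
      exact sum_congr rfl fun q _ => by rw [← add_mul, heig, mul_assoc]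
    linear_combination -hrow
  rw [hG.tsum_eq, hval]
  exact ((hdiag.add (hG.mul_left (L : ℂ))).add hjumps).congr_fun
    (pow_mul_sum_kolmogorovDrift u b w)

theorem tsum_pow_mul_sum_eq_mul_cexp {b σ : ℂ} (hb : ‖b‖ < 1) {w : ι → ℂ}
    (hΛ : ∀ p q, Summable fun k => Λm k p q)
    (heig : ∀ q, ∑ p, w p * (Λ₀ p q : ℂ) + ∑' k, b ^ (k + 1) * ∑ p, w p * (Λm (k + 1) p q : ℂ)
      = σ * w q)
    {F : ℕ → ℝ → ι → ℝ} (hF0 : ∀ n m, F n 0 m = 1) (hF : ∀ n t m, 0 ≤ t → |F n t m| ≤ 1)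
    (hFode : ∀ n t m, 0 ≤ t →
      HasDerivAt (fun s => F n s m) (kolmogorovDrift Λ₀ Λm L (F · t) n m) t)
    {t : ℝ} (ht : 0 ≤ t) :
    ∑' n, b ^ n * ∑ m, w m * (F n t m : ℂ) = (∑ m, w m) / (1 - b) * Complex.exp ((L + σ) * t) := by
  set g : ℝ → ℂ := fun s => ∑' n, b ^ n * ∑ m, w m * (F n s m : ℂ)
  have hterm : ∀ n s, 0 ≤ s → HasDerivAt (fun s => b ^ n * ∑ m, w m * (F n s m : ℂ))
      (b ^ n * ∑ m, w m * (kolmogorovDrift Λ₀ Λm L (F · s) n m : ℂ)) s := fun n s hs =>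
    (HasDerivAt.fun_sum fun m _ => (hFode n s m hs).ofReal_comp.const_mul (w m)).const_mul (b ^ n)
  have hgeo : Summable fun n => ‖b‖ ^ n := summable_geometric_of_lt_one (norm_nonneg b) hb
  have hcont : ContinuousOn g (Set.Ici 0) :=
    continuousOn_tsum (fun n s hs => (hterm n s hs).continuousAt.continuousWithinAt)
      (hgeo.mul_right _) fun n s hs => norm_pow_mul_sum_le b w (hF n s · hs) n
  have hderiv : ∀ s, 0 < s → HasDerivAt g ((L + σ) * g s) s := by
    intro s hs
    rw [← (hasSum_pow_mul_sum_kolmogorovDrift hb hΛ (hF · s · hs.le) heig).tsum_eq]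
    exact hasDerivAt_tsum_of_isPreconnected (hgeo.mul_right _) isOpen_Ioi isPreconnected_Ioi
      (fun n y hy => hterm n y hy.le)
      (fun n y hy => norm_pow_mul_sum_le b w (abs_kolmogorovDrift_le hΛ (hF · y · hy.le) n) n)
      hs (hasSum_pow_mul_sum hb w (hF · s · hs.le)).summable hs
  have hg0 : g 0 = (∑ m, w m) / (1 - b) := by
    simp only [g, hF0, Complex.ofReal_one, mul_one]
    rw [tsum_mul_right, tsum_geometric_of_norm_lt_one hb, div_eq_inv_mul]
  show g t = _
  rw [eq_mul_cexp_of_hasDerivAt hcont hderiv ht, hg0]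

end GeneratingFunction

theorem stmt12_general (c K : ℕ)
    (Λ₀ : Matrix (Fin (c + 1)) (Fin (c + 1)) ℝ)
    (Λm : ℕ → Matrix (Fin (c + 1)) (Fin (c + 1)) ℝ)
    (hΛsum : ∀ p q, Summable (fun k : ℕ => Λm k p q))
    (lam : ℕ → ℝ)
    (J : ℕ)
    (γ : Fin J → ℂ) (β : Fin J → ℂ)
    (hβpos : ∀ j, 0 < ‖β j‖) (hβlt : ∀ j, ‖β j‖ < 1)
    (ω : Fin J → Fin (c + 1) → ℂ)
    (hchar : ∀ (j : Fin J) (q : Fin (c + 1)),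
      (∑ n ∈ Finset.range K, β j ^ n * (lam (K - n) : ℂ)) * ω j q
        + β j ^ K * (∑ p, ω j p * (Λ₀ p q : ℂ))
        + β j ^ K * ∑' n : ℕ, β j ^ (n + 1) * ∑ p, ω j p * (Λm (n + 1) p q : ℂ) = 0)
    (F : ℕ → ℝ → Fin (c + 1) → ℝ)
    (hF0 : ∀ n m, F n 0 m = 1)
    (hFnn : ∀ n t m, 0 ≤ t → 0 ≤ F n t m)
    (hFle : ∀ n t m, 0 ≤ t → F n t m ≤ 1)
    (hFode : ∀ (n : ℕ) (t : ℝ) (m : Fin (c + 1)), 0 ≤ t →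
      HasDerivAt (fun s => F n s m)
        (Λ₀.mulVec (F n t) m + (∑ i ∈ Finset.Icc 1 K, lam i) * F n t m
          + ∑ k ∈ Finset.Icc 1 n, (Λm k).mulVec (F (n - k) t) m) t) :
    ∀ t : ℝ, 0 ≤ t →
      ∑ j : Fin J, γ j * ∑' n : ℕ, β j ^ n * ∑ m, ω j m * (F n t m : ℂ)
        = ∑ j : Fin J, γ j * (∑ m, ω j m) / (1 - β j)
            * Complex.exp ((t : ℂ) * ∑ i ∈ Finset.Icc 1 K,
                (1 - (β j)⁻¹ ^ i) * (lam i : ℂ)) := by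
  intro t ht
  refine sum_congr rfl fun j _ => ?_
  have hb0 : β j ≠ 0 := norm_pos_iff.mp (hβpos j)
  set S := ∑ i ∈ Icc 1 K, (β j)⁻¹ ^ i * (lam i : ℂ)
  have heig : ∀ q, ∑ p, ω j p * (Λ₀ p q : ℂ)
      + ∑' k, β j ^ (k + 1) * ∑ p, ω j p * (Λm (k + 1) p q : ℂ) = -S * ω j q := by
    intro q
    have h := hchar j q
    rw [sum_range_pow_mul_eq_pow_mul_sum_Icc hb0 (fun i => (lam i : ℂ))] at h
    refine mul_left_cancel₀ (pow_ne_zero K hb0) ?_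
    linear_combination h
  have hF : ∀ n t m, 0 ≤ t → |F n t m| ≤ 1 := fun n t m ht =>
    abs_le.mpr ⟨by linarith [hFnn n t m ht], hFle n t m ht⟩
  have hexp : (((∑ i ∈ Icc 1 K, lam i : ℝ) : ℂ) + -S) * t
      = t * ∑ i ∈ Icc 1 K, (1 - (β j)⁻¹ ^ i) * (lam i : ℂ) := by
    simp only [S, sub_mul, one_mul, sum_sub_distrib, Complex.ofReal_sum]
    ring
  rw [tsum_pow_mul_sum_eq_mul_cexp (hβlt j) hΛsum heig hF0 hF hFode ht, hexp]
  ring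

/-- Theorem 6.1 of the paper. For the backward Kolmogorov ODE system of the survival
probabilities `F_n(t)` on the aggregated state space, with downward-jump matrices
`Λ_{-k}` (nonnegative entries, absolutely summable) and upward-jump matrices
`Λ_i = λ_i I` for `i = 1,…,K` (Assumption 6.1), and with row vectors `ω_j` satisfying the
characteristic relation `ω_j (Σ_{n=0}^{K} β_j^n Λ_{K-n} + β_j^K Σ_{n=1}^∞ β_j^n Λ_{-n}) = 0`
for `0 < |β_j| < 1`, one has for all `t ≥ 0`:
`Σ_j γ_j ω_j (Σ_n β_j^n F_n(t)) = Σ_j (γ_j ω_j 𝟙 / (1-β_j)) exp(t Σ_{i=1}^K (1-β_j^{-i})λ_i)`. -/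
theorem stmt12 (c K : ℕ) (hK : 1 ≤ K)
    (Λ₀ : Matrix (Fin (c + 1)) (Fin (c + 1)) ℝ)
    (Λm : ℕ → Matrix (Fin (c + 1)) (Fin (c + 1)) ℝ)
    (hΛnn : ∀ k, 1 ≤ k → ∀ p q, 0 ≤ Λm k p q)
    (hΛsum : ∀ p q, Summable (fun k : ℕ => Λm k p q))
    (lam : ℕ → ℝ) (hlam : ∀ i, 0 ≤ lam i)
    (J : ℕ) (hJ : 1 ≤ J)
    (γ : Fin J → ℂ) (β : Fin J → ℂ)
    (hβpos : ∀ j, 0 < ‖β j‖) (hβlt : ∀ j, ‖β j‖ < 1)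
    (ω : Fin J → Fin (c + 1) → ℂ)
    (hchar : ∀ (j : Fin J) (q : Fin (c + 1)),
      (∑ n ∈ Finset.range K, β j ^ n * (lam (K - n) : ℂ)) * ω j q
        + β j ^ K * (∑ p, ω j p * (Λ₀ p q : ℂ))
        + β j ^ K * ∑' n : ℕ, β j ^ (n + 1) * ∑ p, ω j p * (Λm (n + 1) p q : ℂ) = 0)
    (F : ℕ → ℝ → Fin (c + 1) → ℝ)
    (hF0 : ∀ n m, F n 0 m = 1)
    (hFnn : ∀ n t m, 0 ≤ t → 0 ≤ F n t m)
    (hFle : ∀ n t m, 0 ≤ t → F n t m ≤ 1)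
    (hFode : ∀ (n : ℕ) (t : ℝ) (m : Fin (c + 1)), 0 ≤ t →
      HasDerivAt (fun s => F n s m)
        (Λ₀.mulVec (F n t) m + (∑ i ∈ Finset.Icc 1 K, lam i) * F n t m
          + ∑ k ∈ Finset.Icc 1 n, (Λm k).mulVec (F (n - k) t) m) t) :
    ∀ t : ℝ, 0 ≤ t →
      ∑ j : Fin J, γ j * ∑' n : ℕ, β j ^ n * ∑ m, ω j m * (F n t m : ℂ)
        = ∑ j : Fin J, γ j * (∑ m, ω j m) / (1 - β j)
            * Complex.exp ((t : ℂ) * ∑ i ∈ Finset.Icc 1 K,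
                (1 - (β j)⁻¹ ^ i) * (lam i : ℂ)) :=
  stmt12_general c K Λ₀ Λm hΛsum lam J γ β hβpos hβlt ω hchar F hF0 hFnn hFle hFode
end
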